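/- arXiv:2006.08872 — 5 statements merged into one kernel-verified Lean document; each statement's English description precedes it below -/
import Mathlib

section
/- If E and F are Borel equivalence relations on a standard Borel space X with E ⊆ F, F is hyperfinite, and E is Borel, then E is hyperfinite. -/
open Filter MeasureTheory

def IsBorelER {X : Type*} [MeasurableSpace X] (E : X → X → Prop) : Prop :=
  Equivalence E ∧ MeasurableSet {p : X × X | E p.1 p.2}

def FiniteClasses {X : Type*} (E : X → X → Prop) : Prop := ∀ x, {y | E x y}.Finite

def CountableClasses {X : Type*} (E : X → X → Prop) : Prop := ∀ x, {y | E x y}.Countable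

/-- `E` is hyperfinite: an increasing union of finite Borel equivalence relations. -/
def Hyperfinite {X : Type*} [MeasurableSpace X] (E : X → X → Prop) : Prop :=
  ∃ F : ℕ → X → X → Prop,
    (∀ n, IsBorelER (F n)) ∧ (∀ n, FiniteClasses (F n)) ∧
    (∀ n x y, F n x y → F (n + 1) x y) ∧
    (∀ x y, E x y ↔ ∃ n, F n x y)

/-- The relation `E₀` on `{0,1}^ℕ`. -/
def E0 (a b : ℕ → Bool) : Prop := ∀ᶠ i in Filter.atTop, a i = b i

/-- Tail equivalence: agreement up to a shift `k ∈ ℤ` (encoded as `k = n - m`) eventually. -/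
def Et {Ω : Type*} (a b : ℕ → Ω) : Prop :=
  ∃ m n : ℕ, ∀ᶠ i in Filter.atTop, a (i + m) = b (i + n)

theorem stmt2 {X : Type*} [MeasurableSpace X] [StandardBorelSpace X]
    (E F : X → X → Prop) (hE : IsBorelER E) (hsub : ∀ x y, E x y → F x y)
    (hF : Hyperfinite F) : Hyperfinite E := by
  obtain ⟨G, hGer, hGfin, hGmono, hGun⟩ := hF
  refine ⟨fun n x y => E x y ∧ G n x y, ?_, ?_, ?_, ?_⟩
  · intro n
    obtain ⟨hEeq, hEmeas⟩ := hE
    obtain ⟨hGeq, hGmeas⟩ := hGer n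
    refine ⟨⟨fun x => ⟨hEeq.refl x, hGeq.refl x⟩,
      fun h => ⟨hEeq.symm h.1, hGeq.symm h.2⟩,
      fun h h' => ⟨hEeq.trans h.1 h'.1, hGeq.trans h.2 h'.2⟩⟩, ?_⟩
    exact hEmeas.inter hGmeas
  · intro n x
    exact (hGfin n x).subset fun y hy => hy.2
  · intro n x y h
    exact ⟨h.1, hGmono n x y h.2⟩
  · intro x y
    constructor
    · intro h
      obtain ⟨n, hn⟩ := (hGun x y).1 (hsub x y h)
      exact ⟨n, h, hn⟩
    · rintro ⟨n, h, -⟩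
      exact h
end

section
/- A product of two hyperfinite countable Borel equivalence relations is hyperfinite: if E on X and F on Y are hyperfinite countable Borel equivalence relations, then the equivalence relation E × F on X × Y defined by (x,y) ~ (x',y') iff x ~_E x' and y ~_F y' is hyperfinite. -/
open Filter MeasureTheory

theorem stmt6 {X Y : Type*} [MeasurableSpace X] [StandardBorelSpace X]
    [MeasurableSpace Y] [StandardBorelSpace Y]
    (E : X → X → Prop) (F : Y → Y → Prop)
    (hE : IsBorelER E) (hEc : CountableClasses E) (hEh : Hyperfinite E)
    (hF : IsBorelER F) (hFc : CountableClasses F) (hFh : Hyperfinite F) :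
    Hyperfinite (fun p q : X × Y => E p.1 q.1 ∧ F p.2 q.2) := by
  obtain ⟨G, hGb, hGf, hGi, hGu⟩ := hEh
  obtain ⟨H, hHb, hHf, hHi, hHu⟩ := hFh
  have hGmono : ∀ m n x y, m ≤ n → G m x y → G n x y := by
    intro m n x y h hxy
    induction n with
    | zero => simpa [Nat.le_zero.mp h] using hxy
    | succ k ih =>
      rcases Nat.lt_or_ge m (k+1) with h' | h'
      · exact hGi k x y (ih (Nat.lt_succ_iff.mp h'))
      · have : m = k + 1 := le_antisymm h h'
        simpa [← this] using hxy
  have hHmono : ∀ m n x y, m ≤ n → H m x y → H n x y := by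
    intro m n x y h hxy
    induction n with
    | zero => simpa [Nat.le_zero.mp h] using hxy
    | succ k ih =>
      rcases Nat.lt_or_ge m (k+1) with h' | h'
      · exact hHi k x y (ih (Nat.lt_succ_iff.mp h'))
      · have : m = k + 1 := le_antisymm h h'
        simpa [← this] using hxy
  refine ⟨fun n p q => G n p.1 q.1 ∧ H n p.2 q.2, ?_, ?_, ?_, ?_⟩
  · intro n
    refine ⟨⟨fun p => ⟨(hGb n).1.refl _, (hHb n).1.refl _⟩,
      fun h => ⟨(hGb n).1.symm h.1, (hHb n).1.symm h.2⟩,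
      fun h h' => ⟨(hGb n).1.trans h.1 h'.1, (hHb n).1.trans h.2 h'.2⟩⟩, ?_⟩
    have hmap : Measurable (fun p : (X × Y) × (X × Y) =>
        ((p.1.1, p.2.1), (p.1.2, p.2.2))) := by fun_prop
    have : {p : (X × Y) × (X × Y) | G n p.1.1 p.2.1 ∧ H n p.1.2 p.2.2} =
        (fun p : (X × Y) × (X × Y) => ((p.1.1, p.2.1), (p.1.2, p.2.2))) ⁻¹'
          ({a : X × X | G n a.1 a.2} ×ˢ {b : Y × Y | H n b.1 b.2}) := by
      ext p; simp [Set.mem_prod]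
    rw [show {p : (X × Y) × (X × Y) | (fun p q : X × Y => G n p.1 q.1 ∧ H n p.2 q.2) p.1 p.2}
        = {p : (X × Y) × (X × Y) | G n p.1.1 p.2.1 ∧ H n p.1.2 p.2.2} from rfl, this]
    exact hmap (((hGb n).2).prod ((hHb n).2))
  · intro n p
    have : {q : X × Y | G n p.1 q.1 ∧ H n p.2 q.2} ⊆
        {x | G n p.1 x} ×ˢ {y | H n p.2 y} := fun q hq => ⟨hq.1, hq.2⟩
    exact ((hGf n p.1).prod (hHf n p.2)).subset this
  · exact fun n p q h => ⟨hGi n _ _ h.1, hHi n _ _ h.2⟩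
  · intro p q
    constructor
    · rintro ⟨h1, h2⟩
      obtain ⟨m, hm⟩ := (hGu _ _).mp h1
      obtain ⟨n, hn⟩ := (hHu _ _).mp h2
      exact ⟨max m n, hGmono _ _ _ _ (le_max_left _ _) hm,
        hHmono _ _ _ _ (le_max_right _ _) hn⟩
    · rintro ⟨n, h1, h2⟩
      exact ⟨(hGu _ _).mpr ⟨n, h1⟩, (hHu _ _).mpr ⟨n, h2⟩⟩
end

section
/- Let Ω be a countable set. The tail equivalence relation E_t on Ω^ℕ, defined by (a_i) ~ (b_i) iff there exists k ∈ ℤ such that a_i = b_{i+k} for all sufficiently large i, is a Borel equivalence relation, and it is Borel reducible to E_0 on {0,1}^ℕ; consequently E_t is hyperfinite. -/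
open Filter MeasureTheory

namespace TailHF

open scoped Classical

abbrev X := ℕ → ℕ

def sh (m : ℕ) (x : X) : X := fun i => x (i + m)

@[simp] lemma sh_apply (m : ℕ) (x : X) (i : ℕ) : sh m x i = x (i + m) := rfl

lemma sh_sh (m n : ℕ) (x : X) : sh m (sh n x) = sh (m + n) x := by
  funext i; simp [sh, add_assoc]

@[simp] lemma sh_zero (x : X) : sh 0 x = x := by funext i; simp [sh]

def EtN (x y : X) : Prop := ∃ m n, sh m x = sh n y

lemma EtN.refl (x : X) : EtN x x := ⟨0, 0, rfl⟩

lemma EtN.symm {x y : X} (h : EtN x y) : EtN y x := by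
  obtain ⟨m, n, h⟩ := h; exact ⟨n, m, h.symm⟩

lemma EtN.trans {x y z : X} (h1 : EtN x y) (h2 : EtN y z) : EtN x z := by
  obtain ⟨m, n, h1⟩ := h1
  obtain ⟨p, q, h2⟩ := h2
  refine ⟨p + m, n + q, ?_⟩
  have := congrArg (sh p) h1
  rw [sh_sh, sh_sh] at this
  rw [this]
  have h3 := congrArg (sh n) h2
  rw [sh_sh, sh_sh] at h3
  rw [add_comm p n]
  exact h3

def Aper (x : X) : Prop := ∀ m n, sh m x = sh n x → m = n

lemma aper_sh {x : X} (hx : Aper x) (m : ℕ) : Aper (sh m x) := by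
  intro a b h
  rw [sh_sh, sh_sh] at h
  have := hx _ _ h
  omega

lemma aper_of_etn {x y : X} (hx : Aper x) (h : EtN x y) : Aper y := by
  obtain ⟨u, v, huv⟩ := h
  intro a b hab
  have h1 : sh (v + a) y = sh (v + b) y := by
    rw [← sh_sh, ← sh_sh, hab]
  have h2 : sh (u + a) x = sh (u + b) x := by
    have e1 : sh (u + a) x = sh (v + a) y := by
      rw [add_comm u a, add_comm v a, ← sh_sh, ← sh_sh, huv]
    have e2 : sh (u + b) x = sh (v + b) y := by
      rw [add_comm u b, add_comm v b, ← sh_sh, ← sh_sh, huv]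
    rw [e1, e2, h1]
  have := hx _ _ h2
  omega

def Bdd (x : X) : Prop := ∃ B, ∀ i, x i ≤ B

lemma bdd_sh_iff {x : X} (m : ℕ) : Bdd (sh m x) ↔ Bdd x := by
  constructor
  · rintro ⟨B, hB⟩
    refine ⟨B + (Finset.range m).sup x, fun i => ?_⟩
    rcases lt_or_ge i m with h | h
    · exact le_trans (Finset.le_sup (Finset.mem_range.2 h)) (by omega)
    · have := hB (i - m)
      simp only [sh_apply] at this
      have : x i ≤ B := by rwa [Nat.sub_add_cancel h] at this
      omega
  · rintro ⟨B, hB⟩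
    exact ⟨B, fun i => hB _⟩


/-! ### Recurrent windows -/

def occAt (w : List ℕ) (x : X) (m : ℕ) : Prop := ∀ i < w.length, x (m + i) = w.getD i 0

def occInf (w : List ℕ) (x : X) : Prop := ∀ N, ∃ m, N ≤ m ∧ occAt w x m

lemma occAt_sh {w : List ℕ} {x : X} {m j : ℕ} : occAt w (sh j x) m ↔ occAt w x (m + j) := by
  unfold occAt
  constructor <;> intro h i hi <;> have := h i hi <;> simp only [sh_apply] at this ⊢
  · rw [show m + j + i = m + i + j by ring]; exact this
  · rw [show m + i + j = m + j + i by ring]; exact this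

lemma occInf_sh {w : List ℕ} {x : X} (j : ℕ) : occInf w (sh j x) ↔ occInf w x := by
  constructor
  · intro h N
    obtain ⟨m, hm, ho⟩ := h N
    exact ⟨m + j, by omega, occAt_sh.1 ho⟩
  · intro h N
    obtain ⟨m, hm, ho⟩ := h (N + j)
    refine ⟨m - j, by omega, ?_⟩
    rw [occAt_sh]
    have : m - j + j = m := by omega
    rwa [this]

lemma occAt_append_singleton {w : List ℕ} {l : ℕ} {x : X} {m : ℕ} :
    occAt (w ++ [l]) x m ↔ occAt w x m ∧ x (m + w.length) = l := by
  constructor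
  · intro h
    constructor
    · intro i hi
      have := h i (by simp; omega)
      rwa [List.getD_append _ _ _ _ hi] at this
    · have := h w.length (by simp)
      rwa [List.getD_append_right _ _ _ _ (le_refl _), Nat.sub_self] at this
  · rintro ⟨h1, h2⟩ i hi
    simp only [List.length_append, List.length_singleton] at hi
    rcases lt_or_ge i w.length with h | h
    · rw [List.getD_append _ _ _ _ h]; exact h1 i h
    · have : i = w.length := by omega
      subst this
      rwa [List.getD_append_right _ _ _ _ (le_refl _), Nat.sub_self]

/-- Infinite pigeonhole: a bounded sequence in which `w` occurs infinitely often has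
some one-letter extension of `w` occurring infinitely often. -/
lemma exists_ext {x : X} (hb : Bdd x) {w : List ℕ} (hw : occInf w x) :
    ∃ l, occInf (w ++ [l]) x := by
  obtain ⟨B, hB⟩ := hb
  by_contra hc
  push_neg at hc
  have key : ∀ l, ∃ N, ∀ m, N ≤ m → ¬ occAt (w ++ [l]) x m := by
    intro l
    have := hc l
    unfold occInf at this
    push_neg at this
    obtain ⟨N, hN⟩ := this
    exact ⟨N, fun m hm => hN m hm⟩
  choose N hN using key
  set M := (Finset.range (B + 1)).sup N with hM
  obtain ⟨m, hm, ho⟩ := hw M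
  set l := x (m + w.length) with hl
  have hlB : l ≤ B := hB _
  have : occAt (w ++ [l]) x m := occAt_append_singleton.2 ⟨ho, rfl⟩
  exact hN l m (le_trans (Finset.le_sup (Finset.mem_range.2 (by omega))) hm) this

noncomputable def leastExt (x : X) (w : List ℕ) : ℕ :=
  if h : ∃ l, occInf (w ++ [l]) x then Nat.find h else 0

noncomputable def pr : ℕ → X → List ℕ
  | 0, _ => []
  | (k+1), x => pr k x ++ [leastExt x (pr k x)]

noncomputable def wl (x : X) (k : ℕ) : ℕ := leastExt x (pr k x)

@[simp] lemma pr_length (k : ℕ) (x : X) : (pr k x).length = k := by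
  induction k with
  | zero => rfl
  | succ k ih => simp [pr, ih]

lemma pr_getD {k : ℕ} {x : X} {i : ℕ} (hi : i < k) : (pr k x).getD i 0 = wl x i := by
  induction k with
  | zero => omega
  | succ k ih =>
    rcases lt_or_ge i k with h | h
    · rw [pr, List.getD_append _ _ _ _ (by simp [h]), ih h]
    · have : i = k := by omega
      subst this
      rw [pr, List.getD_append_right _ _ _ _ (by simp), wl]
      simp

lemma leastExt_sh (x : X) (j : ℕ) (w : List ℕ) : leastExt (sh j x) w = leastExt x w := by
  unfold leastExt
  by_cases he : ∃ l, occInf (w ++ [l]) x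
  · have he' : ∃ l, occInf (w ++ [l]) (sh j x) := ⟨he.choose, (occInf_sh j).2 he.choose_spec⟩
    rw [dif_pos he', dif_pos he]
    exact le_antisymm (Nat.find_le ((occInf_sh j).2 (Nat.find_spec he)))
      (Nat.find_le ((occInf_sh j).1 (Nat.find_spec he')))
  · have he' : ¬ ∃ l, occInf (w ++ [l]) (sh j x) := fun ⟨l, hl⟩ => he ⟨l, (occInf_sh j).1 hl⟩
    rw [dif_neg he', dif_neg he]

lemma pr_sh (x : X) (j k : ℕ) : pr k (sh j x) = pr k x := by
  induction k with
  | zero => rfl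
  | succ k ih => rw [pr, pr, ih, leastExt_sh]

lemma wl_sh (x : X) (j k : ℕ) : wl (sh j x) k = wl x k := by
  rw [wl, pr_sh, leastExt_sh, wl]

lemma occInf_pr {x : X} (hb : Bdd x) (k : ℕ) : occInf (pr k x) x := by
  induction k with
  | zero => exact fun N => ⟨N, le_refl _, fun i hi => by simp at hi⟩
  | succ k ih =>
    rw [pr]
    have he : ∃ l, occInf (pr k x ++ [l]) x := exists_ext hb ih
    have : leastExt x (pr k x) = Nat.find he := by rw [leastExt, dif_pos he]
    rw [this]
    exact Nat.find_spec he

/-! ### Markers -/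

def mark (k : ℕ) (x : X) : Prop :=
  Aper x ∧ ((¬ Bdd x ∧ k ≤ x 0) ∨
    (Bdd x ∧ (∀ i < k, x i = wl x i) ∧ ¬ (∀ i, x i = wl x i)))

lemma mark_mono {k k' : ℕ} (h : k ≤ k') {x : X} (hm : mark k' x) : mark k x := by
  obtain ⟨ha, hm⟩ := hm
  refine ⟨ha, ?_⟩
  rcases hm with ⟨h1, h2⟩ | ⟨h1, h2, h3⟩
  · exact Or.inl ⟨h1, by omega⟩
  · exact Or.inr ⟨h1, fun i hi => h2 i (by omega), h3⟩

lemma P3 {x : X} (hx : Aper x) (m : ℕ) : ∃ k, ¬ mark k (sh m x) := by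
  set y := sh m x with hy
  rcases Classical.em (Bdd y) with hb | hb
  · rcases Classical.em (∀ i, y i = wl y i) with hall | hall
    · exact ⟨0, fun ⟨_, h⟩ => by
        rcases h with ⟨h1, _⟩ | ⟨_, _, h3⟩
        · exact h1 hb
        · exact h3 hall⟩
    · push_neg at hall
      obtain ⟨i, hi⟩ := hall
      exact ⟨i + 1, fun ⟨_, h⟩ => by
        rcases h with ⟨h1, _⟩ | ⟨_, h2, _⟩
        · exact h1 hb
        · exact hi (h2 i (by omega))⟩
  · exact ⟨y 0 + 1, fun ⟨_, h⟩ => by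
      rcases h with ⟨_, h2⟩ | ⟨h1, _, _⟩
      · omega
      · exact hb h1⟩

lemma P2 {x : X} (hx : Aper x) (k N : ℕ) : ∃ m, N ≤ m ∧ mark k (sh m x) := by
  rcases Classical.em (Bdd x) with hb | hb
  · -- bounded case: occurrences of `pr k x`, avoiding the unique bad position
    have hocc := occInf_pr hb k
    obtain ⟨m1, hm1, ho1⟩ := hocc N
    obtain ⟨m2, hm2, ho2⟩ := hocc (m1 + 1)
    have hmark : ∀ m, occAt (pr k x) x m → ¬ (∀ i, sh m x i = wl (sh m x) i) →
        mark k (sh m x) := by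
      intro m ho hbad
      refine ⟨aper_sh hx m, Or.inr ⟨(bdd_sh_iff m).2 hb, ?_, hbad⟩⟩
      intro i hi
      have h1 : sh m x i = x (m + i) := by simp [sh, add_comm]
      rw [h1, ho i (by simp [hi]), pr_getD hi, wl_sh]
    rcases Classical.em (∀ i, sh m1 x i = wl (sh m1 x) i) with hb1 | hb1
    · refine ⟨m2, by omega, hmark m2 ho2 ?_⟩
      intro hb2
      have : sh m1 x = sh m2 x := by
        funext i
        rw [hb1 i, hb2 i, wl_sh, wl_sh]
      exact absurd (hx _ _ this) (by omega)
    · exact ⟨m1, hm1, hmark m1 ho1 hb1⟩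
  · -- unbounded case: letters ≥ k occur beyond N
    have : ∃ m, N ≤ m ∧ k ≤ x m := by
      by_contra hc
      push_neg at hc
      apply hb
      refine ⟨k + (Finset.range N).sup x, fun i => ?_⟩
      rcases lt_or_ge i N with h | h
      · exact le_trans (Finset.le_sup (Finset.mem_range.2 h)) (by omega)
      · have := hc i h; omega
    obtain ⟨m, hm, hk⟩ := this
    refine ⟨m, hm, aper_sh hx m, Or.inl ⟨fun hb' => hb ((bdd_sh_iff m).1 hb'), ?_⟩⟩
    simpa [sh] using hk


/-! ### Marker positions -/

noncomputable def r (k : ℕ) (x : X) : ℕ :=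
  if h : ∃ m, mark k (sh m x) then Nat.find h else 0

noncomputable def c (k : ℕ) (x : X) : X := sh (r k x) x

lemma r_exists {x : X} (hx : Aper x) (k : ℕ) : ∃ m, mark k (sh m x) := by
  obtain ⟨m, _, hm⟩ := P2 hx k 0
  exact ⟨m, hm⟩

lemma mark_r {x : X} (hx : Aper x) (k : ℕ) : mark k (sh (r k x) x) := by
  rw [r, dif_pos (r_exists hx k)]
  exact Nat.find_spec (r_exists hx k)

lemma r_le {x : X} (hx : Aper x) {k m : ℕ} (h : mark k (sh m x)) : r k x ≤ m := by
  rw [r, dif_pos (r_exists hx k)]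
  exact Nat.find_le h

lemma r_lt {x : X} (hx : Aper x) {k m : ℕ} (h : m < r k x) : ¬ mark k (sh m x) := by
  intro hm
  exact absurd (r_le hx hm) (by omega)

lemma r_mono {x : X} (hx : Aper x) {k k' : ℕ} (h : k ≤ k') : r k x ≤ r k' x :=
  r_le hx (mark_mono h (mark_r hx k'))

lemma aper_c {x : X} (hx : Aper x) (k : ℕ) : Aper (c k x) := aper_sh hx _

/-- The key step lemma: the next marker position is found by searching along the tail. -/
lemma r_step {x : X} (hx : Aper x) (k k' : ℕ) (hk : k ≤ k') :
    r k' x = r k x + r k' (c k x) := by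
  have hc : Aper (c k x) := aper_c hx k
  have hm : k ≤ k' → r k x ≤ r k' x := r_mono hx
  apply le_antisymm
  · have h1 := mark_r hc k'
    have e : sh (r k' (c k x)) (c k x) = sh (r k' (c k x) + r k x) x := sh_sh _ _ _
    rw [e] at h1
    have h2 := r_le hx h1
    omega
  · have e : sh (r k' x - r k x) (c k x) = sh (r k' x - r k x + r k x) x := sh_sh _ _ _
    have e2 : r k' x - r k x + r k x = r k' x := by have := hm hk; omega
    have h2 : mark k' (sh (r k' x - r k x) (c k x)) := by
      rw [e, e2]; exact mark_r hx k'
    have := r_le hc h2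
    omega

lemma c_step {x : X} (hx : Aper x) (k k' : ℕ) (hk : k ≤ k') :
    c k' x = c k' (c k x) := by
  have e : sh (r k' (c k x)) (c k x) = sh (r k' (c k x) + r k x) x := sh_sh _ _ _
  show sh (r k' x) x = sh (r k' (c k x)) (c k x)
  rw [e, r_step hx k k' hk, add_comm]

/-- Marker positions tend to infinity. -/
lemma r_unbounded {x : X} (hx : Aper x) (B : ℕ) : ∃ k, B ≤ r k x := by
  by_contra hc
  push_neg at hc
  have key : ∀ j, ∃ k, j ≤ r k x ∨ ∀ k', k ≤ k' → r k' x = r k x := by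
    intro j
    induction j with
    | zero => exact ⟨0, Or.inl (by omega)⟩
    | succ j ih =>
      obtain ⟨k, hk⟩ := ih
      rcases hk with hk | hk
      · rcases Classical.em (∃ k', k ≤ k' ∧ r k x < r k' x) with ⟨k', hk', hlt⟩ | hs
        · exact ⟨k', Or.inl (by omega)⟩
        · push_neg at hs
          refine ⟨k, Or.inr fun k' hk' => le_antisymm (hs k' hk') (r_mono hx hk')⟩
      · exact ⟨k, Or.inr hk⟩
  obtain ⟨k0, hk0⟩ := key B
  rcases hk0 with h | h
  · exact absurd (hc k0) (by omega)
  · obtain ⟨k1, hbad⟩ := P3 hx (r k0 x)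
    apply hbad
    rcases le_total k1 k0 with hle | hle
    · exact mark_mono hle (mark_r hx k0)
    · have := mark_r hx k1
      rwa [h k1 hle] at this

lemma r_tail {x : X} (hx : Aper x) {u k : ℕ} (hu : u ≤ r k x) :
    r k x = u + r k (sh u x) := by
  have hta : Aper (sh u x) := aper_sh hx u
  apply le_antisymm
  · have h1 := mark_r hta k
    have e : sh (r k (sh u x)) (sh u x) = sh (r k (sh u x) + u) x := sh_sh _ _ _
    rw [e] at h1
    have := r_le hx h1
    omega
  · have e : sh (r k x - u) (sh u x) = sh (r k x - u + u) x := sh_sh _ _ _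
    have e2 : r k x - u + u = r k x := by omega
    have h2 : mark k (sh (r k x - u) (sh u x)) := by
      rw [e, e2]; exact mark_r hx k
    have := r_le hta h2
    omega

/-- Synchronization: markers of tail-equivalent aperiodic points eventually agree. -/
lemma sync {x y : X} (hx : Aper x) (hy : Aper y) {u v : ℕ} (huv : sh u x = sh v y)
    {k : ℕ} (hu : u ≤ r k x) (hv : v ≤ r k y) :
    c k x = c k y ∧ r k x = u + r k (sh u x) ∧ r k y = v + r k (sh u x) := by
  have hrx : r k x = u + r k (sh u x) := r_tail hx hu
  have hry' : r k y = v + r k (sh v y) := r_tail hy hv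
  have hry : r k y = v + r k (sh u x) := by rw [huv]; exact hry'
  refine ⟨?_, hrx, hry⟩
  have hcx : c k x = sh (r k (sh u x)) (sh u x) := by
    show sh (r k x) x = _
    rw [show sh (r k (sh u x)) (sh u x) = sh (r k (sh u x) + u) x from sh_sh _ _ _,
      hrx, add_comm]
  have hcy : c k y = sh (r k (sh v y)) (sh v y) := by
    show sh (r k y) y = _
    rw [show sh (r k (sh v y)) (sh v y) = sh (r k (sh v y) + v) y from sh_sh _ _ _,
      hry', add_comm]
  rw [hcx, hcy, ← huv]

lemma exists_sync_level {x y : X} (hx : Aper x) {u v : ℕ} (huv : sh u x = sh v y) :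
    ∃ k, u ≤ r k x ∧ v ≤ r k y ∧ c k x = c k y := by
  have hy : Aper y := aper_of_etn hx ⟨u, v, huv⟩
  obtain ⟨k1, hk1⟩ := r_unbounded hx u
  obtain ⟨k2, hk2⟩ := r_unbounded hy v
  refine ⟨max k1 k2, le_trans hk1 (r_mono hx (le_max_left _ _)),
    le_trans hk2 (r_mono hy (le_max_right _ _)), ?_⟩
  exact (sync hx hy huv (le_trans hk1 (r_mono hx (le_max_left _ _)))
    (le_trans hk2 (r_mono hy (le_max_right _ _)))).1

/-- Coherence going up levels. -/
lemma c_eq_mono {x y : X} (hx : Aper x) (hy : Aper y) {k k' : ℕ} (hk : k ≤ k')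
    (hc : c k x = c k y) :
    c k' x = c k' y ∧ r k' x = r k x + r k' (c k x) ∧ r k' y = r k y + r k' (c k x) := by
  refine ⟨?_, r_step hx k k' hk, ?_⟩
  · rw [c_step hx k k' hk, c_step hy k k' hk, hc]
  · rw [hc]; exact r_step hy k k' hk


/-! ### The eventually periodic part -/

def perAt (x : X) (m : ℕ) : Prop := ∃ d, 0 < d ∧ sh (m + d) x = sh m x

lemma perAt_up {x : X} {m : ℕ} (h : perAt x m) (j : ℕ) : perAt x (m + j) := by
  obtain ⟨d, hd, hper⟩ := h
  refine ⟨d, hd, ?_⟩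
  have := congrArg (sh j) hper
  rw [sh_sh, sh_sh] at this
  rw [show m + j + d = j + (m + d) by ring, this, add_comm]

lemma per_cycle {x : X} {m d : ℕ} (hper : sh (m + d) x = sh m x) (j : ℕ) :
    sh (m + j * d) x = sh m x := by
  induction j with
  | zero => simp
  | succ j ih =>
    have := congrArg (sh (j * d)) hper
    rw [sh_sh, sh_sh] at this
    rw [show m + (j + 1) * d = j * d + (m + d) by ring, this, add_comm, ih]

lemma not_aper_iff {x : X} : ¬ Aper x ↔ ∃ m, perAt x m := by
  constructor
  · intro h
    rw [Aper] at h
    push_neg at h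
    obtain ⟨m, n, hmn, hne⟩ := h
    rcases lt_or_gt_of_ne hne with h | h
    · exact ⟨m, n - m, by omega, by rw [show m + (n - m) = n by omega, hmn]⟩
    · exact ⟨n, m - n, by omega, by rw [show n + (m - n) = m by omega, hmn]⟩
  · rintro ⟨m, d, hd, hper⟩ ha
    have := ha _ _ hper
    omega

def lexLe (x y : X) : Prop := x = y ∨ ∃ i, (∀ j < i, x j = y j) ∧ x i < y i

lemma lexLe_refl (x : X) : lexLe x x := Or.inl rfl

lemma lexLe_total (x y : X) : lexLe x y ∨ lexLe y x := by
  rcases Classical.em (x = y) with h | h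
  · exact Or.inl (Or.inl h)
  · have hne : ∃ i, x i ≠ y i := by
      by_contra hc; push_neg at hc; exact h (funext hc)
    set i := Nat.find hne with hi
    have h1 : x i ≠ y i := Nat.find_spec hne
    have h2 : ∀ j < i, x j = y j := fun j hj => by
      have := Nat.find_min hne hj; omega
    rcases lt_or_gt_of_ne h1 with h | h
    · exact Or.inl (Or.inr ⟨i, h2, h⟩)
    · exact Or.inr (Or.inr ⟨i, fun j hj => (h2 j hj).symm, h⟩)

lemma lexLe_antisymm {x y : X} (h1 : lexLe x y) (h2 : lexLe y x) : x = y := by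
  rcases h1 with h1 | ⟨i, hpre, hlt⟩
  · exact h1
  rcases h2 with h2 | ⟨i', hpre', hlt'⟩
  · exact h2.symm
  exfalso
  rcases lt_trichotomy i i' with h | h | h
  · have := hpre' i h; omega
  · subst h; omega
  · have := hpre i' h; omega

lemma lexLe_trans {x y z : X} (h1 : lexLe x y) (h2 : lexLe y z) : lexLe x z := by
  rcases h1 with h1 | ⟨i, hpre, hlt⟩
  · rwa [h1]
  rcases h2 with h2 | ⟨i', hpre', hlt'⟩
  · rw [← h2]; exact Or.inr ⟨i, hpre, hlt⟩
  rcases lt_trichotomy i i' with h | h | h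
  · exact Or.inr ⟨i, fun j hj => (hpre j hj).trans (hpre' j (by omega)),
      by have := hpre' i h; omega⟩
  · subst h; exact Or.inr ⟨i, fun j hj => (hpre j hj).trans (hpre' j hj), by omega⟩
  · exact Or.inr ⟨i', fun j hj => (hpre j (by omega)).trans (hpre' j hj),
      by have := hpre i' h; omega⟩

lemma list_min (l : List X) (hl : l ≠ []) : ∃ z ∈ l, ∀ w ∈ l, lexLe z w := by
  induction l with
  | nil => exact absurd rfl hl
  | cons a l ih =>
    rcases Classical.em (l = []) with h | h
    · subst h
      exact ⟨a, List.mem_singleton.2 rfl, fun w hw => by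
        rw [List.mem_singleton] at hw; rw [hw]; exact lexLe_refl a⟩
    · obtain ⟨z, hz, hmin⟩ := ih h
      rcases lexLe_total a z with hle | hle
      · refine ⟨a, List.mem_cons_self, fun w hw => ?_⟩
        rcases List.mem_cons.1 hw with h | h
        · rw [h]; exact lexLe_refl a
        · exact lexLe_trans hle (hmin w h)
      · refine ⟨z, List.mem_cons_of_mem a hz, fun w hw => ?_⟩
        rcases List.mem_cons.1 hw with h | h
        · rw [h]; exact hle
        · exact hmin w h

def isCanon (x : X) (m : ℕ) : Prop :=
  perAt x m ∧ ∀ m', perAt x m' → lexLe (sh m x) (sh m' x)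

lemma canon_exists {x : X} (hx : ¬ Aper x) : ∃ m, isCanon x m := by
  have hper : ∃ m, perAt x m := not_aper_iff.1 hx
  set m0 := Nat.find hper with hm0
  have hm0per : perAt x m0 := Nat.find_spec hper
  have hm0min : ∀ m', perAt x m' → m0 ≤ m' := fun m' h => Nat.find_le h
  obtain ⟨d, hd, hcyc⟩ := id hm0per
  -- all periodic tails are among the d rotations at m0
  have key : ∀ m', perAt x m' → ∃ i < d, sh m' x = sh (m0 + i) x := by
    intro m' h
    have hle := hm0min m' h
    refine ⟨(m' - m0) % d, Nat.mod_lt _ hd, ?_⟩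
    have hmod : m' = m0 + (m' - m0) % d + ((m' - m0) / d) * d := by
      have h2 : (m' - m0) % d + ((m' - m0) / d) * d = m' - m0 := by
        rw [mul_comm]; exact Nat.mod_add_div _ _
      omega
    have hp : sh (m0 + (m' - m0) % d + d) x = sh (m0 + (m' - m0) % d) x := by
      have := congrArg (sh ((m' - m0) % d)) hcyc
      rw [sh_sh, sh_sh] at this
      rw [show m0 + (m' - m0) % d + d = (m' - m0) % d + (m0 + d) by ring, this, add_comm]
    calc sh m' x = sh (m0 + (m' - m0) % d + ((m' - m0) / d) * d) x := by rw [← hmod]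
      _ = sh (m0 + (m' - m0) % d) x := per_cycle hp _
  have hne : (List.range d).map (fun i => sh (m0 + i) x) ≠ [] := by
    simp [List.range_eq_nil]
    omega
  obtain ⟨z, hz, hmin⟩ := list_min _ hne
  rw [List.mem_map] at hz
  obtain ⟨i, hi, hzi⟩ := hz
  rw [List.mem_range] at hi
  refine ⟨m0 + i, perAt_up ⟨d, hd, hcyc⟩ i, fun m' h => ?_⟩
  obtain ⟨i', hi', he⟩ := key m' h
  rw [he, hzi]
  exact hmin _ (List.mem_map.2 ⟨i', List.mem_range.2 hi', rfl⟩)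

noncomputable def cpos (x : X) : ℕ :=
  if h : ∃ m, isCanon x m then Nat.find h else 0

noncomputable def cper (x : X) : X := sh (cpos x) x

lemma cpos_canon {x : X} (hx : ¬ Aper x) : isCanon x (cpos x) := by
  rw [cpos, dif_pos (canon_exists hx)]
  exact Nat.find_spec (canon_exists hx)

lemma etn_cper {x : X} : EtN x (cper x) := ⟨cpos x, 0, by rw [sh_zero]; rfl⟩

lemma cper_etn {x y : X} (hx : ¬ Aper x) (hy : ¬ Aper y) (h : EtN x y) :
    cper x = cper y := by
  obtain ⟨u, v, huv⟩ := h
  have key : ∀ (x y : X) (u v : ℕ), ¬ Aper x → ¬ Aper y → sh u x = sh v y →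
      lexLe (cper x) (cper y) := by
    intro x y u v hx hy huv
    have hcy := cpos_canon hy
    obtain ⟨d, hd, hcyc⟩ := hcy.1
    -- find a periodic position of x whose tail is cper y
    obtain ⟨j, hj⟩ : ∃ j, v ≤ cpos y + j * d := by
      refine ⟨v, ?_⟩
      have : v ≤ v * d := Nat.le_mul_of_pos_right v hd
      omega
    set q := cpos y + j * d with hq
    have hqt : sh q y = cper y := per_cycle hcyc j
    set m' := q - v + u with hm'
    have hxm' : sh m' x = sh q y := by
      have := congrArg (sh (q - v)) huv
      rw [sh_sh, sh_sh] at this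
      rw [show m' = q - v + u by rfl, this, show q - v + v = q by omega]
    have hper : perAt x m' := by
      refine ⟨d, hd, ?_⟩
      have h1 : sh (m' + d) x = sh (q + d) y := by
        have := congrArg (sh d) hxm'
        rw [sh_sh, sh_sh] at this
        rw [add_comm m' d, this, add_comm]
      have h2 : sh (cpos y + d + j * d) y = sh (cpos y + d) y := by
        have hp : sh (cpos y + d + d) y = sh (cpos y + d) y := by
          have := congrArg (sh d) hcyc
          rw [sh_sh, sh_sh] at this
          rw [show cpos y + d + d = d + (cpos y + d) by ring, this, add_comm]
        exact per_cycle hp j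
      calc sh (m' + d) x = sh (q + d) y := h1
        _ = sh (cpos y + d + j * d) y := by rw [show q + d = cpos y + d + j * d by omega]
        _ = sh (cpos y + d) y := h2
        _ = sh (cpos y) y := hcyc
        _ = sh q y := (per_cycle hcyc j).symm
        _ = sh m' x := hxm'.symm
    have := (cpos_canon hx).2 m' hper
    rwa [hxm', hqt] at this
  exact lexLe_antisymm (key x y u v hx hy huv) (key y x v u hy hx huv.symm)


/-! ### The finite approximating relations -/

def Qm (n k : ℕ) (x : X) : Prop :=
  k ≤ n ∧ r 0 x ≤ n ∧ (∀ j < k, r (j+1) x ≤ r j x + n) ∧ (∀ i < r k x, x i ≤ n)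

def FA (n : ℕ) (x y : X) : Prop := ∃ k, Qm n k x ∧ Qm n k y ∧ c k x = c k y

def FP (n : ℕ) (x y : X) : Prop :=
  cper x = cper y ∧ cpos x ≤ n ∧ cpos y ≤ n ∧
    (∀ i < cpos x, x i ≤ n) ∧ (∀ i < cpos y, y i ≤ n)

def F (n : ℕ) (x y : X) : Prop :=
  x = y ∨ (Aper x ∧ Aper y ∧ FA n x y) ∨ (¬ Aper x ∧ ¬ Aper y ∧ FP n x y)

lemma F_sub_etn {n : ℕ} {x y : X} (h : F n x y) : EtN x y := by
  rcases h with h | ⟨_, _, k, _, _, hc⟩ | ⟨_, _, hc, _⟩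
  · rw [h]; exact EtN.refl y
  · exact ⟨r k x, r k y, hc⟩
  · exact ⟨cpos x, cpos y, hc⟩

lemma FA_trans_aux {n : ℕ} {x y : X} (hx : Aper x) (hy : Aper y)
    {k1 k2 : ℕ} (hk : k1 ≤ k2)
    (q1x : Qm n k1 x) (q1y : Qm n k1 y) (hc1 : c k1 x = c k1 y)
    (q2y : Qm n k2 y) : Qm n k2 x ∧ c k2 x = c k2 y := by
  obtain ⟨hc2, hrx, hry⟩ := c_eq_mono hx hy hk hc1
  refine ⟨⟨q2y.1, q1x.2.1, ?_, ?_⟩, hc2⟩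
  · intro j hj
    rcases lt_or_ge j k1 with h | h
    · exact q1x.2.2.1 j h
    · have e1 : r (j+1) x = r k1 x + r (j+1) (c k1 x) := r_step hx k1 (j+1) (by omega)
      have e2 : r j x = r k1 x + r j (c k1 x) := r_step hx k1 j h
      have e3 : r (j+1) y = r k1 y + r (j+1) (c k1 x) := by
        rw [hc1]; exact r_step hy k1 (j+1) (by omega)
      have e4 : r j y = r k1 y + r j (c k1 x) := by
        rw [hc1]; exact r_step hy k1 j h
      have := q2y.2.2.1 j hj
      omega
  · intro i hi
    rcases lt_or_ge i (r k1 x) with h | h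
    · exact q1x.2.2.2 i h
    · have e1 : x i = c k1 x (i - r k1 x) := by
        show x i = x (i - r k1 x + r k1 x)
        congr 1
        omega
      have e2 : c k1 y (i - r k1 x) = y (i - r k1 x + r k1 y) := rfl
      rw [e1, hc1, e2]
      exact q2y.2.2.2 _ (by omega)

lemma F_refl (n : ℕ) (x : X) : F n x x := Or.inl rfl

lemma F_symm {n : ℕ} {x y : X} (h : F n x y) : F n y x := by
  rcases h with h | ⟨hx, hy, k, qx, qy, hc⟩ | ⟨hx, hy, hc, h1, h2, h3, h4⟩
  · exact Or.inl h.symm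
  · exact Or.inr (Or.inl ⟨hy, hx, k, qy, qx, hc.symm⟩)
  · exact Or.inr (Or.inr ⟨hy, hx, hc.symm, h2, h1, h4, h3⟩)

lemma F_trans {n : ℕ} {x y z : X} (h1 : F n x y) (h2 : F n y z) : F n x z := by
  rcases h1 with h1 | ⟨hx, hy, k1, q1x, q1y, hc1⟩ | ⟨hx, hy, hc1, p1, p2, p3, p4⟩
  · rwa [h1]
  · rcases h2 with h2 | ⟨hy', hz, k2, q2y, q2z, hc2⟩ | ⟨hy', _, _⟩
    · rw [← h2]; exact Or.inr (Or.inl ⟨hx, hy, k1, q1x, q1y, hc1⟩)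
    · rcases le_total k1 k2 with hk | hk
      · obtain ⟨qx, hcx⟩ := FA_trans_aux hx hy hk q1x q1y hc1 q2y
        exact Or.inr (Or.inl ⟨hx, hz, k2, qx, q2z, hcx.trans hc2⟩)
      · obtain ⟨qz, hcz⟩ := FA_trans_aux hz hy hk q2z q2y hc2.symm q1y
        exact Or.inr (Or.inl ⟨hx, hz, k1, q1x, qz, hc1.trans hcz.symm⟩)
    · exact absurd hy hy'
  · rcases h2 with h2 | ⟨hy', _, _⟩ | ⟨_, hz, hc2, r1, r2, r3, r4⟩
    · rw [← h2]; exact Or.inr (Or.inr ⟨hx, hy, hc1, p1, p2, p3, p4⟩)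
    · exact absurd hy' hy
    · exact Or.inr (Or.inr ⟨hx, hz, hc1.trans hc2, p1, r2, p3, r4⟩)

lemma F_equiv (n : ℕ) : Equivalence (F n) :=
  ⟨F_refl n, F_symm, F_trans⟩

lemma F_mono {n : ℕ} {x y : X} (h : F n x y) : F (n+1) x y := by
  rcases h with h | ⟨hx, hy, k, ⟨a1, a2, a3, a4⟩, ⟨b1, b2, b3, b4⟩, hc⟩ |
    ⟨hx, hy, hc, p1, p2, p3, p4⟩
  · exact Or.inl h
  · exact Or.inr (Or.inl ⟨hx, hy, k, ⟨by omega, by omega,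
      fun j hj => by have := a3 j hj; omega, fun i hi => by have := a4 i hi; omega⟩,
      ⟨by omega, by omega, fun j hj => by have := b3 j hj; omega,
      fun i hi => by have := b4 i hi; omega⟩, hc⟩)
  · exact Or.inr (Or.inr ⟨hx, hy, hc, by omega, by omega,
      fun i hi => by have := p3 i hi; omega, fun i hi => by have := p4 i hi; omega⟩)

/-! ### Finiteness of classes -/

lemma finLem (t : X) (L n : ℕ) :
    {y : X | ∃ m, m ≤ L ∧ (∀ i < m, y i ≤ n) ∧ sh m y = t}.Finite := by
  have : {y : X | ∃ m, m ≤ L ∧ (∀ i < m, y i ≤ n) ∧ sh m y = t} ⊆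
      Set.range (fun p : Fin (L+1) × (Fin (L+1) → Fin (n+1)) =>
        (fun i => if h : i < p.1.val then (p.2 ⟨i, by omega⟩).val else t (i - p.1.val) : X)) := by
    rintro y ⟨m, hm, hh, ht⟩
    refine ⟨⟨⟨m, by omega⟩, fun i => ⟨min (y i.val) n, by omega⟩⟩, ?_⟩
    funext i
    simp only
    split_ifs with h
    · have := hh i h
      simp [min_eq_left this]
    · have : t (i - m) = y (i - m + m) := by rw [← ht]; rfl
      rw [this]
      congr 1
      omega
  exact Set.Finite.subset (Set.finite_range _) this

lemma Qm_r_bound {n k : ℕ} {y : X} (q : Qm n k y) : r k y ≤ n + k * n := by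
  have key : ∀ j, j ≤ k → r j y ≤ n + j * n := by
    intro j hj
    induction j with
    | zero => simpa using q.2.1
    | succ j ih =>
      have h1 := q.2.2.1 j (by omega)
      have h2 := ih (by omega)
      have : (j + 1) * n = j * n + n := by ring
      omega
  exact key k (le_refl k)

lemma F_finite_classes (n : ℕ) (x : X) : {y : X | F n x y}.Finite := by
  have hsub : {y : X | F n x y} ⊆ {x} ∪
      (⋃ k ∈ Finset.range (n+1), {y : X | ∃ m, m ≤ n + n * n ∧ (∀ i < m, y i ≤ n) ∧ sh m y = c k x}) ∪
      {y : X | ∃ m, m ≤ n ∧ (∀ i < m, y i ≤ n) ∧ sh m y = cper x} := by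
    rintro y (h | ⟨hx, hy, k, qx, qy, hc⟩ | ⟨hx, hy, hc, p1, p2, p3, p4⟩)
    · exact Or.inl (Or.inl (by rw [h]; rfl))
    · refine Or.inl (Or.inr ?_)
      have hb := Qm_r_bound qy
      have hk := qx.1
      have hmul : k * n ≤ n * n := Nat.mul_le_mul_right n hk
      refine Set.mem_biUnion (Finset.mem_range.2 (by omega : k < n + 1)) ?_
      exact ⟨r k y, by omega, qy.2.2.2, hc.symm⟩
    · exact Or.inr ⟨cpos y, p2, p4, hc.symm⟩
  apply Set.Finite.subset _ hsub
  apply Set.Finite.union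
  apply Set.Finite.union
  · exact Set.finite_singleton x
  · exact Set.Finite.biUnion (Finset.range (n+1)).finite_toSet
      (fun k _ => finLem (c k x) (n + n * n) n)
  · exact finLem (cper x) n n

/-! ### Union of the `F n` is tail equivalence -/

lemma etn_iff_F {x y : X} : EtN x y ↔ ∃ n, F n x y := by
  constructor
  · intro h
    rcases Classical.em (Aper x) with hx | hx
    · have hy : Aper y := aper_of_etn hx h
      obtain ⟨u, v, huv⟩ := h
      obtain ⟨k, hu, hv, hc⟩ := exists_sync_level hx huv
      set n := k + r 0 x + r 0 y +
        ((Finset.range k).sup fun j => r (j+1) x) +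
        ((Finset.range k).sup fun j => r (j+1) y) +
        ((Finset.range (r k x)).sup x) + ((Finset.range (r k y)).sup y) with hn
      refine ⟨n, Or.inr (Or.inl ⟨hx, hy, k, ⟨by omega, by omega, ?_, ?_⟩,
        ⟨by omega, by omega, ?_, ?_⟩, hc⟩)⟩
      · intro j hj
        have h1 : r (j+1) x ≤ (Finset.range k).sup fun j => r (j+1) x := by
          exact Finset.le_sup (f := fun j => r (j+1) x) (Finset.mem_range.2 hj)
        omega
      · intro i hi
        have := Finset.le_sup (f := x) (Finset.mem_range.2 hi)
        omega
      · intro j hj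
        have h1 : r (j+1) y ≤ (Finset.range k).sup fun j => r (j+1) y := by
          exact Finset.le_sup (f := fun j => r (j+1) y) (Finset.mem_range.2 hj)
        omega
      · intro i hi
        have := Finset.le_sup (f := y) (Finset.mem_range.2 hi)
        omega
    · have hy : ¬ Aper y := fun hy => hx (aper_of_etn hy h.symm)
      have hc : cper x = cper y := cper_etn hx hy h
      set n := cpos x + cpos y +
        ((Finset.range (cpos x)).sup x) + ((Finset.range (cpos y)).sup y) with hn
      refine ⟨n, Or.inr (Or.inr ⟨hx, hy, hc, by omega, by omega, ?_, ?_⟩)⟩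
      · intro i hi
        have := Finset.le_sup (f := x) (Finset.mem_range.2 hi)
        omega
      · intro i hi
        have := Finset.le_sup (f := y) (Finset.mem_range.2 hi)
        omega
  · rintro ⟨n, h⟩
    exact F_sub_etn h


/-! ### The reduction to E0 -/

noncomputable def word (k : ℕ) (x : X) : List ℕ :=
  (List.range (r (k+1) x - r k x)).map (c k x)

noncomputable def inv (x : X) (k : ℕ) : ℕ :=
  if Aper x then Nat.pair 0 (Encodable.encode (word k x)) else Nat.pair 1 (cper x k)

lemma range_map_eq {L L' : ℕ} {f g : ℕ → ℕ}
    (h : (List.range L).map f = (List.range L').map g) :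
    L = L' ∧ ∀ i < L, f i = g i := by
  have hL : L = L' := by
    have := congrArg List.length h
    simpa using this
  subst hL
  refine ⟨rfl, fun i hi => ?_⟩
  have h1 : ((List.range L).map f)[i]'(by simpa using hi) = f i := by simp
  have h2 : ((List.range L).map g)[i]'(by simpa using hi) = g i := by simp
  rw [← h1, ← h2]
  simp only [h]

lemma word_eq_of_c_eq {x y : X} (hx : Aper x) (hy : Aper y) {k : ℕ}
    (hc : c k x = c k y) : word k x = word k y := by
  obtain ⟨_, hrx, hry⟩ := c_eq_mono hx hy (by omega : k ≤ k + 1) hc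
  have hlen : r (k+1) x - r k x = r (k+1) y - r k y := by omega
  rw [word, word, hc, hlen]

/-- Forward: tail equivalent aperiodic points have eventually equal words. -/
lemma words_ev_eq {x y : X} (hx : Aper x) (hy : Aper y) (h : EtN x y) :
    ∃ N, ∀ k, N ≤ k → word k x = word k y := by
  obtain ⟨u, v, huv⟩ := h
  obtain ⟨k0, hu, hv, hc⟩ := exists_sync_level hx huv
  exact ⟨k0, fun k hk => word_eq_of_c_eq hx hy (c_eq_mono hx hy hk hc).1⟩

/-- Backward: eventually equal words imply tail equivalence. -/
lemma etn_of_words_ev_eq {x y : X} (hx : Aper x) (hy : Aper y)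
    {N : ℕ} (h : ∀ k, N ≤ k → word k x = word k y) : EtN x y := by
  have hy' := hy
  -- main induction
  have key : ∀ K, N ≤ K → ∃ s, r K x = r N x + s ∧ r K y = r N y + s ∧
      ∀ i < s, c N x i = c N y i := by
    intro K hK
    induction K with
    | zero =>
      have : N = 0 := by omega
      subst this
      exact ⟨0, by omega, by omega, fun i hi => by omega⟩
    | succ K ih =>
      rcases Nat.lt_or_ge N (K+1) with hlt | hge
      · have hK' : N ≤ K := by omega
        obtain ⟨s, hsx, hsy, hval⟩ := ih hK'
        have hw := h K hK'
        rw [word, word] at hw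
        obtain ⟨hlen, hvals⟩ := range_map_eq hw
        have hmx : r K x ≤ r (K+1) x := r_mono hx (Nat.le_succ K)
        have hmy : r K y ≤ r (K+1) y := r_mono hy (Nat.le_succ K)
        refine ⟨s + (r (K+1) x - r K x), by omega, by omega, ?_⟩
        intro i hi
        rcases lt_or_ge i s with h' | h'
        · exact hval i h'
        · have hj : i - s < r (K+1) x - r K x := by omega
          have e1 : c N x i = c K x (i - s) := by
            show x (i + r N x) = x ((i - s) + r K x)
            congr 1
            omega
          have e2 : c N y i = c K y (i - s) := by
            show y (i + r N y) = y ((i - s) + r K y)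
            congr 1
            omega
          rw [e1, e2]
          exact hvals _ hj
      · have : N = K + 1 := by omega
        subst this
        exact ⟨0, by omega, by omega, fun i hi => by omega⟩
  have hc : c N x = c N y := by
    funext i
    obtain ⟨k1, hk1⟩ := r_unbounded hx (r N x + i + 1)
    have hK : N ≤ max N k1 := le_max_left _ _
    have hb : r N x + i + 1 ≤ r (max N k1) x :=
      le_trans hk1 (r_mono hx (le_max_right _ _))
    obtain ⟨s, hsx, _, hval⟩ := key (max N k1) hK
    exact hval i (by omega)
  exact ⟨r N x, r N y, hc⟩

/-! ### Coding sequences into `2^ℕ` -/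

def code (u : ℕ → ℕ) : ℕ → Bool := fun i =>
  decide ((Nat.unpair i).2 = u (Nat.unpair i).1)

lemma code_iff {u v : ℕ → ℕ} :
    (∃ N, ∀ k, N ≤ k → u k = v k) ↔ (∃ M, ∀ i, M ≤ i → code u i = code v i) := by
  constructor
  · rintro ⟨N, hN⟩
    refine ⟨(Finset.range N).sup (fun n => max (Nat.pair n (u n)) (Nat.pair n (v n))) + 1,
      fun i hi => ?_⟩
    set n := (Nat.unpair i).1 with hn
    set j := (Nat.unpair i).2 with hj
    rcases Nat.lt_or_ge n N with h | h
    · by_contra hne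
      have hij : Nat.pair n j = i := by rw [hn, hj, Nat.pair_unpair]
      have hsup : ∀ w, w = u n ∨ w = v n → Nat.pair n w < i := by
        intro w hw
        have h1 : max (Nat.pair n (u n)) (Nat.pair n (v n)) ≤
            (Finset.range N).sup (fun n => max (Nat.pair n (u n)) (Nat.pair n (v n))) := by
          exact Finset.le_sup (f := fun n => max (Nat.pair n (u n)) (Nat.pair n (v n)))
            (Finset.mem_range.2 h)
        rcases hw with hw | hw <;> rw [hw] <;> omega
      -- code u i ≠ code v i means j equals exactly one of u n, v n
      rw [code, code] at hne
      simp only [← hn, ← hj, decide_eq_decide] at hne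
      have : j = u n ∨ j = v n := by tauto
      have := hsup j this
      omega
    · have : u n = v n := hN n h
      rw [code, code]
      simp only [← hn, ← hj, this]
  · rintro ⟨M, hM⟩
    refine ⟨M, fun n hn => ?_⟩
    have hle : M ≤ Nat.pair n (u n) := le_trans hn (Nat.left_le_pair n (u n))
    have := hM _ hle
    rw [code, code, Nat.unpair_pair] at this
    simp only [decide_eq_decide] at this
    exact this.1 trivial

/-- The full correctness of the reduction on `ℕ`-sequences. -/
lemma inv_correct {x y : X} : EtN x y ↔ ∃ N, ∀ k, N ≤ k → inv x k = inv y k := by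
  constructor
  · intro h
    rcases Classical.em (Aper x) with hx | hx
    · have hy : Aper y := aper_of_etn hx h
      obtain ⟨N, hN⟩ := words_ev_eq hx hy h
      exact ⟨N, fun k hk => by rw [inv, inv, if_pos hx, if_pos hy, hN k hk]⟩
    · have hy : ¬ Aper y := fun hy => hx (aper_of_etn hy h.symm)
      have hc : cper x = cper y := cper_etn hx hy h
      exact ⟨0, fun k _ => by rw [inv, inv, if_neg hx, if_neg hy, hc]⟩
  · rintro ⟨N, hN⟩
    rcases Classical.em (Aper x) with hx | hx <;> rcases Classical.em (Aper y) with hy | hy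
    · -- both aperiodic
      have hw : ∀ k, N ≤ k → word k x = word k y := by
        intro k hk
        have := hN k hk
        rw [inv, inv, if_pos hx, if_pos hy] at this
        have := (Nat.pair_eq_pair.1 this).2
        exact Encodable.encode_injective this
      exact etn_of_words_ev_eq hx hy hw
    · exfalso
      have := hN N (le_refl N)
      rw [inv, inv, if_pos hx, if_neg hy] at this
      exact absurd (Nat.pair_eq_pair.1 this).1 (by omega)
    · exfalso
      have := hN N (le_refl N)
      rw [inv, inv, if_neg hx, if_pos hy] at this
      exact absurd (Nat.pair_eq_pair.1 this).1 (by omega)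
    · -- both eventually periodic
      have hc' : ∀ k, N ≤ k → cper x k = cper y k := by
        intro k hk
        have := hN k hk
        rw [inv, inv, if_neg hx, if_neg hy] at this
        exact (Nat.pair_eq_pair.1 this).2
      have h1 : sh N (cper x) = sh N (cper y) := by
        funext i
        exact hc' (i + N) (by omega)
      have h2 : EtN (cper x) (cper y) := ⟨N, N, h1⟩
      exact (etn_cper (x := x)).trans (h2.trans (etn_cper (x := y)).symm)

noncomputable def fN (x : X) : ℕ → Bool := code (inv x)

lemma fN_correct {x y : X} : EtN x y ↔ ∃ M, ∀ i, M ≤ i → fN x i = fN y i := by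
  rw [inv_correct, code_iff]
  rfl


/-! ### Measurability -/

section Meas

lemma ms_coord (i c : ℕ) : MeasurableSet {x : X | x i = c} :=
  measurableSet_eq_fun (measurable_pi_apply i) measurable_const

lemma ms_imp {P : Prop} {S : Set X} (hS : MeasurableSet S) :
    MeasurableSet {x : X | P → x ∈ S} := by
  by_cases h : P
  · have : {x : X | P → x ∈ S} = S := by ext x; simp [h]
    rwa [this]
  · have : {x : X | P → x ∈ S} = Set.univ := by ext x; simp [h]
    rw [this]; exact MeasurableSet.univ

lemma ms_and {P : Prop} {S : Set X} (hS : MeasurableSet S) :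
    MeasurableSet {x : X | P ∧ x ∈ S} := by
  by_cases h : P
  · have : {x : X | P ∧ x ∈ S} = S := by ext x; simp [h]
    rwa [this]
  · have : {x : X | P ∧ x ∈ S} = ∅ := by ext x; simp [h]
    rw [this]; exact MeasurableSet.empty

lemma measurable_sh (m : ℕ) : Measurable (sh m) :=
  measurable_pi_lambda _ (fun i => measurable_pi_apply (i + m))

lemma ms_sh_eq_self (a b : ℕ) : MeasurableSet {x : X | sh a x = sh b x} := by
  have : {x : X | sh a x = sh b x} = ⋂ i, {x : X | x (i + a) = x (i + b)} := by
    ext x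
    simp only [Set.mem_iInter, Set.mem_setOf_eq]
    exact ⟨fun h i => congrFun h i, fun h => funext h⟩
  rw [this]
  exact MeasurableSet.iInter fun i =>
    measurableSet_eq_fun (measurable_pi_apply _) (measurable_pi_apply _)

lemma ms_aper : MeasurableSet {x : X | Aper x} := by
  have : {x : X | Aper x} = ⋂ m, ⋂ n, {x : X | m = n ∨ ¬ sh m x = sh n x} := by
    ext x
    simp only [Set.mem_iInter, Set.mem_setOf_eq]
    constructor
    · intro h m n
      by_cases hmn : m = n
      · exact Or.inl hmn
      · exact Or.inr (fun he => hmn (h m n he))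
    · intro h m n he
      rcases h m n with h' | h'
      · exact h'
      · exact absurd he h'
  rw [this]
  refine MeasurableSet.iInter fun m => MeasurableSet.iInter fun n => ?_
  by_cases hmn : m = n
  · have : {x : X | m = n ∨ ¬ sh m x = sh n x} = Set.univ := by ext x; simp [hmn]
    rw [this]; exact MeasurableSet.univ
  · have : {x : X | m = n ∨ ¬ sh m x = sh n x} = {x : X | sh m x = sh n x}ᶜ := by
      ext x; simp [hmn]
    rw [this]; exact (ms_sh_eq_self m n).compl

lemma ms_le_coord (i n : ℕ) : MeasurableSet {x : X | x i ≤ n} := by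
  have : {x : X | x i ≤ n} = ⋃ c, ⋃ (_ : c ≤ n), {x : X | x i = c} := by
    ext x
    simp only [Set.mem_iUnion, Set.mem_setOf_eq]
    exact ⟨fun h => ⟨x i, h, rfl⟩, fun ⟨c, hc, he⟩ => by omega⟩
  rw [this]
  exact MeasurableSet.iUnion fun c => MeasurableSet.iUnion fun _ => ms_coord i c

lemma ms_ge_coord (i n : ℕ) : MeasurableSet {x : X | n ≤ x i} := by
  by_cases h : n = 0
  · have : {x : X | n ≤ x i} = Set.univ := by ext x; simp [h]
    rw [this]; exact MeasurableSet.univ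
  · have : {x : X | n ≤ x i} = {x : X | x i ≤ n - 1}ᶜ := by
      ext x
      simp only [Set.mem_compl_iff, Set.mem_setOf_eq]
      omega
    rw [this]; exact (ms_le_coord i (n-1)).compl

lemma ms_bdd : MeasurableSet {x : X | Bdd x} := by
  have : {x : X | Bdd x} = ⋃ B, ⋂ i, {x : X | x i ≤ B} := by
    ext x
    simp only [Set.mem_iUnion, Set.mem_iInter, Set.mem_setOf_eq]
    exact ⟨fun ⟨B, hB⟩ => ⟨B, hB⟩, fun ⟨B, hB⟩ => ⟨B, hB⟩⟩
  rw [this]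
  exact MeasurableSet.iUnion fun B => MeasurableSet.iInter fun i => ms_le_coord i B

lemma ms_occAt (w : List ℕ) (m : ℕ) : MeasurableSet {x : X | occAt w x m} := by
  have : {x : X | occAt w x m} =
      ⋂ i, {x : X | i < w.length → x ∈ {x : X | x (m + i) = w.getD i 0}} := by
    ext x
    simp only [Set.mem_iInter, Set.mem_setOf_eq, occAt]
  rw [this]
  exact MeasurableSet.iInter fun i => ms_imp (ms_coord _ _)

lemma ms_occInf (w : List ℕ) : MeasurableSet {x : X | occInf w x} := by
  have : {x : X | occInf w x} =
      ⋂ N, ⋃ m, ⋃ (_ : N ≤ m), {x : X | occAt w x m} := by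
    ext x
    simp only [Set.mem_iInter, Set.mem_iUnion, Set.mem_setOf_eq, occInf]
    constructor
    · intro h N; obtain ⟨m, h1, h2⟩ := h N; exact ⟨m, h1, h2⟩
    · intro h N; obtain ⟨m, h1, h2⟩ := h N; exact ⟨m, h1, h2⟩
  rw [this]
  exact MeasurableSet.iInter fun N => MeasurableSet.iUnion fun m =>
    MeasurableSet.iUnion fun _ => ms_occAt w m

lemma ms_leastExt (w : List ℕ) (l : ℕ) :
    MeasurableSet {x : X | leastExt x w = l} := by
  have : {x : X | leastExt x w = l} =
      ({x : X | occInf (w ++ [l]) x} ∩ ⋂ l', {x : X | l' < l → x ∈ {x : X | ¬ occInf (w ++ [l']) x}}) ∪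
      {x : X | l = 0 ∧ x ∈ ⋂ l', {x : X | ¬ occInf (w ++ [l']) x}} := by
    ext x
    simp only [Set.mem_union, Set.mem_inter_iff, Set.mem_iInter, Set.mem_setOf_eq]
    by_cases h : ∃ l', occInf (w ++ [l']) x
    · rw [leastExt, dif_pos h]
      constructor
      · intro hl
        subst hl
        exact Or.inl ⟨Nat.find_spec h, fun l' hl' => Nat.find_min h hl'⟩
      · rintro (⟨h1, h2⟩ | ⟨h1, h2⟩)
        · exact le_antisymm (Nat.find_le h1) (by
            by_contra hc
            push_neg at hc
            exact h2 _ hc (Nat.find_spec h))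
        · exact absurd h (by push_neg; exact h2)
    · rw [leastExt, dif_neg h]
      push_neg at h
      constructor
      · intro hl
        exact Or.inr ⟨hl.symm, h⟩
      · rintro (⟨h1, _⟩ | ⟨h1, _⟩)
        · exact absurd h1 (h l)
        · exact h1.symm
  rw [this]
  refine MeasurableSet.union ?_ (ms_and (MeasurableSet.iInter fun l' => (ms_occInf _).compl))
  exact (ms_occInf _).inter (MeasurableSet.iInter fun l' => ms_imp (ms_occInf _).compl)

lemma ms_pr (k : ℕ) (w : List ℕ) : MeasurableSet {x : X | pr k x = w} := by
  induction k generalizing w with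
  | zero =>
    by_cases h : w = []
    · have : {x : X | pr 0 x = w} = Set.univ := by ext x; simp [pr, h]
      rw [this]; exact MeasurableSet.univ
    · have : {x : X | pr 0 x = w} = ∅ := by
        ext x
        simp only [Set.mem_setOf_eq, Set.mem_empty_iff_false, iff_false]
        exact fun he => h (he.symm.trans (rfl : pr 0 x = []))
      rw [this]; exact MeasurableSet.empty
  | succ k ih =>
    by_cases h : w = []
    · have : {x : X | pr (k+1) x = w} = ∅ := by
        ext x
        simp only [Set.mem_setOf_eq, Set.mem_empty_iff_false, iff_false, h, pr]
        intro hc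
        exact absurd hc (by simp)
      rw [this]; exact MeasurableSet.empty
    · have : {x : X | pr (k+1) x = w} =
          {x : X | pr k x = w.dropLast} ∩ {x : X | leastExt x w.dropLast = w.getLast h} := by
        ext x
        simp only [Set.mem_inter_iff, Set.mem_setOf_eq, pr]
        constructor
        · intro he
          have h1 : (pr k x ++ [leastExt x (pr k x)]).dropLast = pr k x := by
            simp
          have h2 : (pr k x ++ [leastExt x (pr k x)]).getLast (by simp) =
              leastExt x (pr k x) := List.getLast_append _
          constructor
          · rw [← he, h1]
          · rw [show w.getLast h = (pr k x ++ [leastExt x (pr k x)]).getLast (by simp) from by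
              congr 1; exact he.symm, h2, ← he, h1]
        · rintro ⟨h1, h2⟩
          conv_rhs => rw [← List.dropLast_append_getLast h]
          rw [h1, h2]
      rw [this]
      exact (ih _).inter (ms_leastExt _ _)

lemma ms_wl (i l : ℕ) : MeasurableSet {x : X | wl x i = l} := by
  have : {x : X | wl x i = l} = ⋃ w : List ℕ,
      {x : X | pr i x = w} ∩ {x : X | leastExt x w = l} := by
    ext x
    simp only [Set.mem_iUnion, Set.mem_inter_iff, Set.mem_setOf_eq]
    constructor
    · intro h
      exact ⟨pr i x, rfl, by rw [← h]; rfl⟩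
    · rintro ⟨w, h1, h2⟩
      rw [wl, h1, h2]
  rw [this]
  exact MeasurableSet.iUnion fun w => (ms_pr i w).inter (ms_leastExt w l)

lemma ms_mark (k : ℕ) : MeasurableSet {x : X | mark k x} := by
  have hcoord : ∀ i, MeasurableSet {x : X | x i = wl x i} := by
    intro i
    have : {x : X | x i = wl x i} = ⋃ l, {x : X | x i = l} ∩ {x : X | wl x i = l} := by
      ext x
      simp only [Set.mem_iUnion, Set.mem_inter_iff, Set.mem_setOf_eq]
      exact ⟨fun h => ⟨wl x i, h, rfl⟩, fun ⟨l, h1, h2⟩ => by rw [h1, h2]⟩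
    rw [this]
    exact MeasurableSet.iUnion fun l => (ms_coord i l).inter (ms_wl i l)
  have : {x : X | mark k x} = {x : X | Aper x} ∩
      (({x : X | Bdd x}ᶜ ∩ {x : X | k ≤ x 0}) ∪
       ({x : X | Bdd x} ∩ (⋂ i, {x : X | i < k → x ∈ {x : X | x i = wl x i}}) ∩
        (⋂ i, {x : X | x i = wl x i})ᶜ)) := by
    ext x
    simp only [mark, Set.mem_inter_iff, Set.mem_union, Set.mem_compl_iff, Set.mem_iInter,
      Set.mem_setOf_eq]
    tauto
  rw [this]
  exact ms_aper.inter ((ms_bdd.compl.inter (ms_ge_coord 0 k)).union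
    ((ms_bdd.inter (MeasurableSet.iInter fun i => ms_imp (hcoord i))).inter
      (MeasurableSet.iInter fun i => hcoord i).compl))

lemma ms_r (k m : ℕ) : MeasurableSet {x : X | r k x = m} := by
  have : {x : X | r k x = m} =
      (((sh m) ⁻¹' {x : X | mark k x}) ∩
        ⋂ m', {x : X | m' < m → x ∈ ((sh m') ⁻¹' {x : X | mark k x})ᶜ}) ∪
      {x : X | m = 0 ∧ x ∈ ⋂ m', ((sh m') ⁻¹' {x : X | mark k x})ᶜ} := by
    ext x
    simp only [Set.mem_union, Set.mem_inter_iff, Set.mem_iInter, Set.mem_preimage,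
      Set.mem_compl_iff, Set.mem_setOf_eq]
    by_cases h : ∃ m', mark k (sh m' x)
    · rw [r, dif_pos h]
      constructor
      · intro hl
        subst hl
        exact Or.inl ⟨Nat.find_spec h, fun m' hm' => Nat.find_min h hm'⟩
      · rintro (⟨h1, h2⟩ | ⟨h1, h2⟩)
        · exact le_antisymm (Nat.find_le h1) (by
            by_contra hc
            push_neg at hc
            exact h2 _ hc (Nat.find_spec h))
        · obtain ⟨m', hm'⟩ := h
          exact absurd hm' (h2 m')
    · rw [r, dif_neg h]
      push_neg at h
      constructor
      · intro hl
        exact Or.inr ⟨hl.symm, h⟩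
      · rintro (⟨h1, _⟩ | ⟨h1, _⟩)
        · exact absurd h1 (h m)
        · exact h1.symm
  rw [this]
  refine MeasurableSet.union ?_ (ms_and (MeasurableSet.iInter fun m' =>
    ((measurable_sh m') (ms_mark k)).compl))
  exact ((measurable_sh m) (ms_mark k)).inter (MeasurableSet.iInter fun m' =>
    ms_imp ((measurable_sh m') (ms_mark k)).compl)


lemma msp_coord_eq (a b : ℕ) : MeasurableSet {p : X × X | p.1 a = p.2 b} := by
  apply measurableSet_eq_fun (f := fun p : X × X => p.1 a)
    (g := fun p : X × X => p.2 b)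
  · exact (measurable_pi_apply a).comp measurable_fst
  · exact (measurable_pi_apply b).comp measurable_snd

lemma msp_sh_eq (m m' : ℕ) : MeasurableSet {p : X × X | sh m p.1 = sh m' p.2} := by
  have : {p : X × X | sh m p.1 = sh m' p.2} = ⋂ i, {p : X × X | p.1 (i + m) = p.2 (i + m')} := by
    ext p
    simp only [Set.mem_iInter, Set.mem_setOf_eq]
    exact ⟨fun h i => congrFun h i, fun h => funext h⟩
  rw [this]
  exact MeasurableSet.iInter fun i => msp_coord_eq _ _

lemma msp_c_eq (k : ℕ) : MeasurableSet {p : X × X | c k p.1 = c k p.2} := by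
  have : {p : X × X | c k p.1 = c k p.2} = ⋃ m, ⋃ m',
      ((Prod.fst ⁻¹' {x : X | r k x = m}) ∩ (Prod.snd ⁻¹' {x : X | r k x = m'}) ∩
        {p : X × X | sh m p.1 = sh m' p.2}) := by
    ext p
    simp only [Set.mem_iUnion, Set.mem_inter_iff, Set.mem_preimage, Set.mem_setOf_eq]
    constructor
    · intro h
      refine ⟨r k p.1, r k p.2, ⟨rfl, rfl⟩, h⟩
    · rintro ⟨m, m', ⟨h1, h2⟩, h3⟩
      show sh (r k p.1) p.1 = sh (r k p.2) p.2
      rw [h1, h2]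
      exact h3
  rw [this]
  exact MeasurableSet.iUnion fun m => MeasurableSet.iUnion fun m' =>
    ((measurable_fst (ms_r k m)).inter (measurable_snd (ms_r k m'))).inter (msp_sh_eq m m')

lemma ms_r_le (k n : ℕ) : MeasurableSet {x : X | r k x ≤ n} := by
  have : {x : X | r k x ≤ n} = ⋃ m, ⋃ (_ : m ≤ n), {x : X | r k x = m} := by
    ext x
    simp only [Set.mem_iUnion, Set.mem_setOf_eq]
    exact ⟨fun h => ⟨r k x, h, rfl⟩, fun ⟨m, h1, h2⟩ => by omega⟩
  rw [this]
  exact MeasurableSet.iUnion fun m => MeasurableSet.iUnion fun _ => ms_r k m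

lemma ms_Qm (n k : ℕ) : MeasurableSet {x : X | Qm n k x} := by
  have : {x : X | Qm n k x} = {x : X | k ≤ n ∧ x ∈
      ({x : X | r 0 x ≤ n} ∩
       (⋂ j, {x : X | j < k → x ∈ ⋃ a, ⋃ b, ⋃ (_ : a ≤ b + n),
          ({x : X | r (j+1) x = a} ∩ {x : X | r j x = b})}) ∩
       (⋂ i, ⋃ m, ({x : X | r k x = m} ∩ {x : X | i < m → x ∈ {x : X | x i ≤ n}})))} := by
    ext x
    simp only [Qm, Set.mem_setOf_eq, Set.mem_inter_iff, Set.mem_iInter, Set.mem_iUnion]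
    constructor
    · rintro ⟨h1, h2, h3, h4⟩
      refine ⟨h1, ⟨h2, fun j hj => ⟨r (j+1) x, r j x, h3 j hj, rfl, rfl⟩⟩, fun i => ⟨r k x, rfl, fun hi => h4 i hi⟩⟩
    · rintro ⟨h1, ⟨h2, h3⟩, h4⟩
      refine ⟨h1, h2, fun j hj => ?_, fun i hi => ?_⟩
      · obtain ⟨a, b, hab, ha, hb⟩ := h3 j hj
        omega
      · obtain ⟨m, hm, h⟩ := h4 i
        exact h (by omega)
  rw [this]
  refine ms_and (((ms_r_le 0 n).inter ?_).inter ?_)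
  · exact MeasurableSet.iInter fun j => ms_imp (MeasurableSet.iUnion fun a =>
      MeasurableSet.iUnion fun b => MeasurableSet.iUnion fun _ =>
        (ms_r (j+1) a).inter (ms_r j b))
  · exact MeasurableSet.iInter fun i => MeasurableSet.iUnion fun m =>
      (ms_r k m).inter (ms_imp (ms_le_coord i n))

lemma msp_FA (n : ℕ) : MeasurableSet {p : X × X | FA n p.1 p.2} := by
  have : {p : X × X | FA n p.1 p.2} = ⋃ k,
      ((Prod.fst ⁻¹' {x : X | Qm n k x}) ∩ (Prod.snd ⁻¹' {x : X | Qm n k x}) ∩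
        {p : X × X | c k p.1 = c k p.2}) := by
    ext p
    simp only [FA, Set.mem_iUnion, Set.mem_inter_iff, Set.mem_preimage, Set.mem_setOf_eq]
    tauto
  rw [this]
  exact MeasurableSet.iUnion fun k =>
    ((measurable_fst (ms_Qm n k)).inter (measurable_snd (ms_Qm n k))).inter (msp_c_eq k)

lemma ms_perAt (m : ℕ) : MeasurableSet {x : X | perAt x m} := by
  have : {x : X | perAt x m} = ⋃ d, ⋃ (_ : 0 < d), {x : X | sh (m + d) x = sh m x} := by
    ext x
    simp only [perAt, Set.mem_iUnion, Set.mem_setOf_eq]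
    tauto
  rw [this]
  exact MeasurableSet.iUnion fun d => MeasurableSet.iUnion fun _ => ms_sh_eq_self _ _

lemma ms_lt_coord (a b : ℕ) : MeasurableSet {x : X | x a < x b} := by
  have : {x : X | x a < x b} = ⋃ u, ⋃ v, ⋃ (_ : u < v),
      ({x : X | x a = u} ∩ {x : X | x b = v}) := by
    ext x
    simp only [Set.mem_iUnion, Set.mem_inter_iff, Set.mem_setOf_eq]
    constructor
    · intro h
      exact ⟨x a, x b, h, rfl, rfl⟩
    · rintro ⟨u, v, huv, h1, h2⟩
      omega
  rw [this]
  exact MeasurableSet.iUnion fun u => MeasurableSet.iUnion fun v =>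
    MeasurableSet.iUnion fun _ => (ms_coord a u).inter (ms_coord b v)

lemma ms_lexLe_sh (m m' : ℕ) : MeasurableSet {x : X | lexLe (sh m x) (sh m' x)} := by
  have : {x : X | lexLe (sh m x) (sh m' x)} = {x : X | sh m x = sh m' x} ∪
      ⋃ i, ((⋂ j, {x : X | j < i → x ∈ {x : X | x (j + m) = x (j + m')}}) ∩
        {x : X | x (i + m) < x (i + m')}) := by
    ext x
    simp only [lexLe, Set.mem_union, Set.mem_iUnion, Set.mem_inter_iff, Set.mem_iInter,
      Set.mem_setOf_eq]
    constructor
    · rintro (h | ⟨i, h1, h2⟩)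
      · exact Or.inl h
      · exact Or.inr ⟨i, fun j hj => h1 j hj, h2⟩
    · rintro (h | ⟨i, h1, h2⟩)
      · exact Or.inl h
      · exact Or.inr ⟨i, fun j hj => h1 j hj, h2⟩
  rw [this]
  exact (ms_sh_eq_self m m').union (MeasurableSet.iUnion fun i =>
    (MeasurableSet.iInter fun j => ms_imp (msp_coord_eq_self j m m')).inter
      (ms_lt_coord (i + m) (i + m')))
where
  msp_coord_eq_self (j m m' : ℕ) : MeasurableSet {x : X | x (j + m) = x (j + m')} :=
    measurableSet_eq_fun (measurable_pi_apply _) (measurable_pi_apply _)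

lemma ms_isCanon (m : ℕ) : MeasurableSet {x : X | isCanon x m} := by
  have : {x : X | isCanon x m} = {x : X | perAt x m} ∩
      ⋂ m', ({x : X | perAt x m'}ᶜ ∪ {x : X | lexLe (sh m x) (sh m' x)}) := by
    ext x
    simp only [isCanon, Set.mem_inter_iff, Set.mem_iInter, Set.mem_union, Set.mem_compl_iff,
      Set.mem_setOf_eq]
    constructor
    · rintro ⟨h1, h2⟩
      exact ⟨h1, fun m' => by
        rcases Classical.em (perAt x m') with h | h
        · exact Or.inr (h2 m' h)
        · exact Or.inl h⟩
    · rintro ⟨h1, h2⟩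
      refine ⟨h1, fun m' hm' => ?_⟩
      rcases h2 m' with h | h
      · exact absurd hm' h
      · exact h
  rw [this]
  exact (ms_perAt m).inter (MeasurableSet.iInter fun m' =>
    (ms_perAt m').compl.union (ms_lexLe_sh m m'))

lemma ms_cpos (m : ℕ) : MeasurableSet {x : X | cpos x = m} := by
  have : {x : X | cpos x = m} =
      (({x : X | isCanon x m}) ∩
        ⋂ m', {x : X | m' < m → x ∈ {x : X | isCanon x m'}ᶜ}) ∪
      {x : X | m = 0 ∧ x ∈ ⋂ m', {x : X | isCanon x m'}ᶜ} := by
    ext x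
    simp only [Set.mem_union, Set.mem_inter_iff, Set.mem_iInter, Set.mem_compl_iff,
      Set.mem_setOf_eq]
    by_cases h : ∃ m', isCanon x m'
    · rw [cpos, dif_pos h]
      constructor
      · intro hl
        subst hl
        exact Or.inl ⟨Nat.find_spec h, fun m' hm' => Nat.find_min h hm'⟩
      · rintro (⟨h1, h2⟩ | ⟨h1, h2⟩)
        · exact le_antisymm (Nat.find_le h1) (by
            by_contra hc
            push_neg at hc
            exact h2 _ hc (Nat.find_spec h))
        · obtain ⟨m', hm'⟩ := h
          exact absurd hm' (h2 m')
    · rw [cpos, dif_neg h]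
      push_neg at h
      constructor
      · intro hl
        exact Or.inr ⟨hl.symm, h⟩
      · rintro (⟨h1, _⟩ | ⟨h1, _⟩)
        · exact absurd h1 (h m)
        · exact h1.symm
  rw [this]
  refine MeasurableSet.union ?_ (ms_and (MeasurableSet.iInter fun m' => (ms_isCanon m').compl))
  exact (ms_isCanon m).inter (MeasurableSet.iInter fun m' => ms_imp (ms_isCanon m').compl)

lemma msp_cper_eq : MeasurableSet {p : X × X | cper p.1 = cper p.2} := by
  have : {p : X × X | cper p.1 = cper p.2} = ⋃ m, ⋃ m',
      ((Prod.fst ⁻¹' {x : X | cpos x = m}) ∩ (Prod.snd ⁻¹' {x : X | cpos x = m'}) ∩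
        {p : X × X | sh m p.1 = sh m' p.2}) := by
    ext p
    simp only [Set.mem_iUnion, Set.mem_inter_iff, Set.mem_preimage, Set.mem_setOf_eq]
    constructor
    · intro h
      exact ⟨cpos p.1, cpos p.2, ⟨rfl, rfl⟩, h⟩
    · rintro ⟨m, m', ⟨h1, h2⟩, h3⟩
      show sh (cpos p.1) p.1 = sh (cpos p.2) p.2
      rw [h1, h2]
      exact h3
  rw [this]
  exact MeasurableSet.iUnion fun m => MeasurableSet.iUnion fun m' =>
    ((measurable_fst (ms_cpos m)).inter (measurable_snd (ms_cpos m'))).inter (msp_sh_eq m m')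

lemma ms_cpos_le (n : ℕ) : MeasurableSet {x : X | cpos x ≤ n} := by
  have : {x : X | cpos x ≤ n} = ⋃ m, ⋃ (_ : m ≤ n), {x : X | cpos x = m} := by
    ext x
    simp only [Set.mem_iUnion, Set.mem_setOf_eq]
    exact ⟨fun h => ⟨cpos x, h, rfl⟩, fun ⟨m, h1, h2⟩ => by omega⟩
  rw [this]
  exact MeasurableSet.iUnion fun m => MeasurableSet.iUnion fun _ => ms_cpos m

lemma ms_cpos_heads (n : ℕ) : MeasurableSet {x : X | ∀ i < cpos x, x i ≤ n} := by
  have : {x : X | ∀ i < cpos x, x i ≤ n} =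
      ⋂ i, ⋃ m, ({x : X | cpos x = m} ∩ {x : X | i < m → x ∈ {x : X | x i ≤ n}}) := by
    ext x
    simp only [Set.mem_iInter, Set.mem_iUnion, Set.mem_inter_iff, Set.mem_setOf_eq]
    constructor
    · intro h i
      exact ⟨cpos x, rfl, fun hi => h i hi⟩
    · intro h i hi
      obtain ⟨m, hm, hh⟩ := h i
      exact hh (by omega)
  rw [this]
  exact MeasurableSet.iInter fun i => MeasurableSet.iUnion fun m =>
    (ms_cpos m).inter (ms_imp (ms_le_coord i n))

lemma msp_FP (n : ℕ) : MeasurableSet {p : X × X | FP n p.1 p.2} := by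
  have : {p : X × X | FP n p.1 p.2} = {p : X × X | cper p.1 = cper p.2} ∩
      (Prod.fst ⁻¹' ({x : X | cpos x ≤ n} ∩ {x : X | ∀ i < cpos x, x i ≤ n})) ∩
      (Prod.snd ⁻¹' ({x : X | cpos x ≤ n} ∩ {x : X | ∀ i < cpos x, x i ≤ n})) := by
    ext p
    simp only [FP, Set.mem_inter_iff, Set.mem_preimage, Set.mem_setOf_eq]
    tauto
  rw [this]
  exact (msp_cper_eq.inter (measurable_fst ((ms_cpos_le n).inter (ms_cpos_heads n)))).inter
    (measurable_snd ((ms_cpos_le n).inter (ms_cpos_heads n)))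

lemma msp_eq : MeasurableSet {p : X × X | p.1 = p.2} := by
  have : {p : X × X | p.1 = p.2} = ⋂ i, {p : X × X | p.1 i = p.2 i} := by
    ext p
    simp only [Set.mem_iInter, Set.mem_setOf_eq]
    exact ⟨fun h i => congrFun h i, fun h => funext h⟩
  rw [this]
  exact MeasurableSet.iInter fun i => msp_coord_eq i i

lemma msp_F (n : ℕ) : MeasurableSet {p : X × X | F n p.1 p.2} := by
  have : {p : X × X | F n p.1 p.2} = {p : X × X | p.1 = p.2} ∪
      ((Prod.fst ⁻¹' {x : X | Aper x}) ∩ (Prod.snd ⁻¹' {x : X | Aper x}) ∩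
        {p : X × X | FA n p.1 p.2}) ∪
      ((Prod.fst ⁻¹' {x : X | Aper x}ᶜ) ∩ (Prod.snd ⁻¹' {x : X | Aper x}ᶜ) ∩
        {p : X × X | FP n p.1 p.2}) := by
    ext p
    simp only [F, Set.mem_union, Set.mem_inter_iff, Set.mem_preimage, Set.mem_compl_iff,
      Set.mem_setOf_eq]
    tauto
  rw [this]
  exact (msp_eq.union (((measurable_fst ms_aper).inter (measurable_snd ms_aper)).inter
    (msp_FA n))).union (((measurable_fst ms_aper.compl).inter
      (measurable_snd ms_aper.compl)).inter (msp_FP n))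


lemma list_eq_iff (L : ℕ) (f : ℕ → ℕ) (w : List ℕ) :
    (List.range L).map f = w ↔ w.length = L ∧ ∀ i < L, f i = w.getD i 0 := by
  constructor
  · intro h
    refine ⟨by rw [← h]; simp, fun i hi => ?_⟩
    rw [← h]
    exact (by simp [hi] : ((List.range L).map f).getD i 0 = f i).symm
  · rintro ⟨h1, h2⟩
    apply List.ext_getElem (by simp [h1])
    intro i hi1 hi2
    have hiL : i < L := by simpa using hi1
    have e1 : ((List.range L).map f)[i] = f i := by simp
    have e2 : w[i] = w.getD i 0 := (List.getD_eq_getElem w 0 hi2).symm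
    rw [e1, e2]
    exact h2 i hiL

lemma ms_word (n : ℕ) (w : List ℕ) : MeasurableSet {x : X | word n x = w} := by
  have : {x : X | word n x = w} = ⋃ a, ⋃ b,
      ({x : X | r n x = a} ∩ {x : X | r (n+1) x = b} ∩
        {x : X | w.length = b - a ∧ x ∈ ⋂ i, {x : X | i < b - a → x ∈ {x : X | x (i + a) = w.getD i 0}}}) := by
    ext x
    simp only [Set.mem_iUnion, Set.mem_inter_iff, Set.mem_iInter, Set.mem_setOf_eq]
    constructor
    · intro h
      refine ⟨r n x, r (n+1) x, ⟨rfl, rfl⟩, ?_⟩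
      rw [word] at h
      have := (list_eq_iff _ _ _).1 h
      exact ⟨this.1, fun i hi => this.2 i hi⟩
    · rintro ⟨a, b, ⟨h1, h2⟩, h3, h4⟩
      rw [word]
      apply (list_eq_iff _ _ _).2
      rw [h1, h2]
      exact ⟨h3, fun i hi => by
        have : c n x i = x (i + a) := by show x (i + r n x) = x (i + a); rw [h1]
        rw [← h1, ← h2] at hi
        rw [show c n x i = x (i + a) from by show x (i + r n x) = x (i + a); rw [h1]]
        exact h4 i (by omega)⟩
  rw [this]
  refine MeasurableSet.iUnion fun a => MeasurableSet.iUnion fun b => ?_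
  exact ((ms_r n a).inter (ms_r (n+1) b)).inter
    (ms_and (MeasurableSet.iInter fun i => ms_imp (ms_coord _ _)))

lemma ms_cper_coord (i v : ℕ) : MeasurableSet {x : X | cper x i = v} := by
  have : {x : X | cper x i = v} = ⋃ m, ({x : X | cpos x = m} ∩ {x : X | x (i + m) = v}) := by
    ext x
    simp only [Set.mem_iUnion, Set.mem_inter_iff, Set.mem_setOf_eq]
    constructor
    · intro h
      exact ⟨cpos x, rfl, h⟩
    · rintro ⟨m, h1, h2⟩
      show x (i + cpos x) = v
      rw [h1]
      exact h2
  rw [this]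
  exact MeasurableSet.iUnion fun m => (ms_cpos m).inter (ms_coord _ _)

lemma ms_inv (n j : ℕ) : MeasurableSet {x : X | inv x n = j} := by
  have : {x : X | inv x n = j} =
      ({x : X | Aper x} ∩ ⋃ w : List ℕ,
        {x : X | Nat.pair 0 (Encodable.encode w) = j ∧ x ∈ {x : X | word n x = w}}) ∪
      ({x : X | Aper x}ᶜ ∩ ⋃ v, {x : X | Nat.pair 1 v = j ∧ x ∈ {x : X | cper x n = v}}) := by
    ext x
    simp only [Set.mem_union, Set.mem_inter_iff, Set.mem_iUnion, Set.mem_compl_iff,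
      Set.mem_setOf_eq, inv]
    by_cases h : Aper x
    · rw [if_pos h]
      constructor
      · intro he
        exact Or.inl ⟨h, word n x, he, rfl⟩
      · rintro (⟨_, w, he, hw⟩ | ⟨hn, _⟩)
        · rw [hw]; exact he
        · exact absurd h hn
    · rw [if_neg h]
      constructor
      · intro he
        exact Or.inr ⟨h, cper x n, he, rfl⟩
      · rintro (⟨hn, _⟩ | ⟨_, v, he, hv⟩)
        · exact absurd hn h
        · rw [hv]; exact he
  rw [this]
  refine MeasurableSet.union (ms_aper.inter (MeasurableSet.iUnion fun w => ms_and (ms_word n w)))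
    (ms_aper.compl.inter (MeasurableSet.iUnion fun v => ms_and (ms_cper_coord n v)))

lemma measurable_inv_coord (n : ℕ) : Measurable (fun x : X => inv x n) :=
  measurable_to_countable' (fun j => ms_inv n j)

lemma measurable_fN : Measurable fN := by
  apply measurable_pi_lambda
  intro i
  have : (fun x : X => fN x i) =
      (fun v : ℕ => decide ((Nat.unpair i).2 = v)) ∘ (fun x : X => inv x (Nat.unpair i).1) := rfl
  rw [this]
  exact measurable_from_top.comp (measurable_inv_coord _)

lemma msp_etn : MeasurableSet {p : X × X | EtN p.1 p.2} := by
  have : {p : X × X | EtN p.1 p.2} = ⋃ m, ⋃ n, {p : X × X | sh m p.1 = sh n p.2} := by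
    ext p
    simp only [EtN, Set.mem_iUnion, Set.mem_setOf_eq]
  rw [this]
  exact MeasurableSet.iUnion fun m => MeasurableSet.iUnion fun n => msp_sh_eq m n

end Meas


/-! ### Bridging to the statement's definitions -/

lemma et_iff_forall {Ω : Type*} (a b : ℕ → Ω) :
    Et a b ↔ ∃ m n : ℕ, ∀ i, a (i + m) = b (i + n) := by
  constructor
  · rintro ⟨m, n, h⟩
    rw [Filter.eventually_atTop] at h
    obtain ⟨N, hN⟩ := h
    refine ⟨m + N, n + N, fun i => ?_⟩
    have := hN (i + N) (by omega)
    rw [show i + (m + N) = i + N + m by omega, show i + (n + N) = i + N + n by omega]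
    exact this
  · rintro ⟨m, n, h⟩
    exact ⟨m, n, Filter.Eventually.of_forall h⟩

section Assembly

variable {Ω : Type*} [Countable Ω] [MeasurableSpace Ω] [MeasurableSingletonClass Ω]

lemma measurable_of_countable_dom {β : Type*} [MeasurableSpace β] (g : Ω → β) :
    Measurable g := by
  intro s _
  exact (Set.to_countable _).measurableSet

lemma et_iff_etn (e : Ω → ℕ) (he : Function.Injective e) (a b : ℕ → Ω) :
    Et a b ↔ EtN (fun i => e (a i)) (fun i => e (b i)) := by
  rw [et_iff_forall]
  constructor
  · rintro ⟨m, n, h⟩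
    exact ⟨m, n, funext fun i => congrArg e (h i)⟩
  · rintro ⟨m, n, h⟩
    exact ⟨m, n, fun i => he (congrFun h i)⟩

lemma E0_iff (u v : ℕ → Bool) : E0 u v ↔ ∃ M, ∀ i, M ≤ i → u i = v i := by
  rw [E0]
  exact Filter.eventually_atTop

theorem main_result :
    IsBorelER (Et (Ω := Ω)) ∧
    (∃ f : (ℕ → Ω) → (ℕ → Bool), Measurable f ∧
      ∀ a b : ℕ → Ω, Et a b ↔ E0 (f a) (f b)) ∧
    Hyperfinite (Et (Ω := Ω)) := by
  obtain ⟨e, he⟩ := exists_injective_nat Ω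
  set Emb : (ℕ → Ω) → X := fun a i => e (a i) with hEmb
  have hEmb_inj : Function.Injective Emb := by
    intro a b h
    funext i
    exact he (congrFun h i)
  have hEmb_meas : Measurable Emb :=
    measurable_pi_lambda _ (fun i => (measurable_of_countable_dom e).comp (measurable_pi_apply i))
  have hbridge : ∀ a b : ℕ → Ω, Et a b ↔ EtN (Emb a) (Emb b) := et_iff_etn e he
  have hpair : Measurable (fun p : (ℕ → Ω) × (ℕ → Ω) => (Emb p.1, Emb p.2)) :=
    (hEmb_meas.comp measurable_fst).prodMk (hEmb_meas.comp measurable_snd)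
  refine ⟨⟨?_, ?_⟩, ⟨fN ∘ Emb, measurable_fN.comp hEmb_meas, ?_⟩, ?_⟩
  · -- Equivalence
    constructor
    · intro a
      exact (hbridge a a).2 (EtN.refl (Emb a))
    · intro a b h
      exact (hbridge _ _).2 ((hbridge _ _).1 h).symm
    · intro a b c h1 h2
      exact (hbridge _ _).2 (((hbridge _ _).1 h1).trans ((hbridge _ _).1 h2))
  · -- Measurability of Et
    have : {p : (ℕ → Ω) × (ℕ → Ω) | Et p.1 p.2} =
        (fun p : (ℕ → Ω) × (ℕ → Ω) => (Emb p.1, Emb p.2)) ⁻¹' {p : X × X | EtN p.1 p.2} := by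
      ext p
      simp only [Set.mem_preimage, Set.mem_setOf_eq]
      exact hbridge p.1 p.2
    rw [this]
    exact hpair msp_etn
  · -- the reduction
    intro a b
    rw [hbridge a b, fN_correct, E0_iff]
    rfl
  · -- hyperfiniteness
    refine ⟨fun n a b => F n (Emb a) (Emb b), fun n => ⟨⟨?_, ?_, ?_⟩, ?_⟩, ?_, ?_, ?_⟩
    · intro a
      exact F_refl n (Emb a)
    · intro a b h
      exact F_symm h
    · intro a b c h1 h2
      exact F_trans h1 h2
    · have : {p : (ℕ → Ω) × (ℕ → Ω) | F n (Emb p.1) (Emb p.2)} =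
          (fun p : (ℕ → Ω) × (ℕ → Ω) => (Emb p.1, Emb p.2)) ⁻¹' {p : X × X | F n p.1 p.2} :=
        rfl
      rw [this]
      exact hpair (msp_F n)
    · intro n a
      have : {b : ℕ → Ω | F n (Emb a) (Emb b)} = Emb ⁻¹' {y : X | F n (Emb a) y} := rfl
      rw [this]
      exact Set.Finite.preimage (hEmb_inj.injOn) (F_finite_classes n (Emb a))
    · intro n a b h
      exact F_mono h
    · intro a b
      rw [hbridge a b, etn_iff_F]
  
end Assembly

end TailHF

theorem stmt8 {Ω : Type*} [Countable Ω] [MeasurableSpace Ω] [MeasurableSingletonClass Ω] :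
    IsBorelER (Et (Ω := Ω)) ∧
    (∃ f : (ℕ → Ω) → (ℕ → Bool), Measurable f ∧
      ∀ a b : ℕ → Ω, Et a b ↔ E0 (f a) (f b)) ∧
    Hyperfinite (Et (Ω := Ω)) := TailHF.main_result
end

section
/- If a Borel equivalence relation E on a standard Borel space X is induced by a Borel action of ℤ (i.e., E is the orbit equivalence relation of a Borel ℤ-action), then E is hyperfinite. -/
open Filter MeasureTheory

namespace SS16

/-- agreement of first `n` bits -/
def eqn (n : ℕ) (u v : ℕ → Bool) : Prop := ∀ i < n, u i = v i
/-- strict lex inequality witnessed within first `n` bits -/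
def ltn (n : ℕ) (u v : ℕ → Bool) : Prop := ∃ i < n, eqn i u v ∧ u i = false ∧ v i = true
/-- lex ≤ on first `n` bits -/
def leB (n : ℕ) (u v : ℕ → Bool) : Prop := ltn n u v ∨ eqn n u v

theorem eqn_refl (n : ℕ) (u : ℕ → Bool) : eqn n u u := fun _ _ => rfl
theorem eqn_symm {n u v} (h : eqn n u v) : eqn n v u := fun i hi => (h i hi).symm
theorem eqn_trans {n u v w} (h : eqn n u v) (h' : eqn n v w) : eqn n u w :=
  fun i hi => (h i hi).trans (h' i hi)
theorem eqn_mono {m n u v} (hmn : m ≤ n) (h : eqn n u v) : eqn m u v :=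
  fun i hi => h i (lt_of_lt_of_le hi hmn)
theorem eqn_succ {n u v} : eqn (n+1) u v ↔ eqn n u v ∧ u n = v n := by
  constructor
  · exact fun h => ⟨eqn_mono (Nat.le_succ n) h, h n (Nat.lt_succ_self n)⟩
  · rintro ⟨h1, h2⟩ i hi
    rcases Nat.lt_succ_iff_lt_or_eq.1 hi with h | h
    · exact h1 i h
    · subst h; exact h2

theorem ltn_succ {n u v} : ltn (n+1) u v ↔ ltn n u v ∨ (eqn n u v ∧ u n = false ∧ v n = true) := by
  constructor
  · rintro ⟨i, hi, he, hu, hv⟩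
    rcases Nat.lt_succ_iff_lt_or_eq.1 hi with h | h
    · exact Or.inl ⟨i, h, he, hu, hv⟩
    · subst h; exact Or.inr ⟨he, hu, hv⟩
  · rintro (⟨i, hi, he, hu, hv⟩ | ⟨he, hu, hv⟩)
    · exact ⟨i, Nat.lt_succ_of_lt hi, he, hu, hv⟩
    · exact ⟨n, Nat.lt_succ_self n, he, hu, hv⟩

theorem ltn_mono_succ {n u v} (h : ltn n u v) : ltn (n+1) u v := ltn_succ.2 (Or.inl h)

theorem ltn_not_eqn {n u v} (h : ltn n u v) : ¬ eqn n u v := by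
  rintro he
  obtain ⟨i, hi, -, hu, hv⟩ := h
  rw [he i hi, hv] at hu; exact Bool.true_eq_false.mp hu

theorem ltn_asymm {n u v} (h : ltn n u v) (h' : ltn n v u) : False := by
  obtain ⟨i, hi, he, hu, hv⟩ := h
  obtain ⟨j, hj, he', hu', hv'⟩ := h'
  rcases lt_trichotomy i j with hij | hij | hij
  · have := he' i hij; rw [hu, hv] at this; exact Bool.true_eq_false.mp this
  · subst hij; rw [hu'] at hv; exact Bool.true_eq_false.mp hv.symm
  · have := he j hij; rw [hu', hv'] at this; exact absurd this (by simp)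

theorem leB_refl (n : ℕ) (u : ℕ → Bool) : leB n u u := Or.inr (eqn_refl n u)

theorem leB_mono_succ {n u v} (h : leB (n+1) u v) : leB n u v := by
  rcases h with h | h
  · rcases ltn_succ.1 h with h | ⟨he, -, -⟩
    · exact Or.inl h
    · exact Or.inr he
  · exact Or.inr (eqn_mono (Nat.le_succ n) h)

theorem leB_mono {m n u v} (hmn : m ≤ n) (h : leB n u v) : leB m u v := by
  induction n, hmn using Nat.le_induction with
  | base => exact h
  | succ n hn ih => exact ih (leB_mono_succ h)

theorem leB_succ {n u v} :
    leB (n+1) u v ↔ ltn n u v ∨ (eqn n u v ∧ (u n = false ∨ v n = true)) := by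
  constructor
  · rintro (h | h)
    · rcases ltn_succ.1 h with h | ⟨he, hu, hv⟩
      · exact Or.inl h
      · exact Or.inr ⟨he, Or.inl hu⟩
    · exact Or.inr ⟨eqn_mono (Nat.le_succ n) h, by
        have h2 := (eqn_succ.1 h).2
        cases hv : v n
        · exact Or.inl (h2.trans hv)
        · exact Or.inr rfl⟩
  · rintro (h | ⟨he, hb⟩)
    · exact Or.inl (ltn_mono_succ h)
    · cases hu : u n <;> cases hv : v n
      · exact Or.inr (eqn_succ.2 ⟨he, by rw [hu, hv]⟩)
      · exact Or.inl (ltn_succ.2 (Or.inr ⟨he, hu, hv⟩))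
      · rcases hb with hb | hb
        · rw [hu] at hb; exact absurd hb (by simp)
        · rw [hv] at hb; exact absurd hb (by simp)
      · exact Or.inr (eqn_succ.2 ⟨he, by rw [hu, hv]⟩)

theorem leB_trichotomy (n : ℕ) (u v : ℕ → Bool) : ltn n u v ∨ eqn n u v ∨ ltn n v u := by
  induction n with
  | zero => exact Or.inr (Or.inl (fun i hi => absurd hi (Nat.not_lt_zero i)))
  | succ n ih =>
    rcases ih with h | h | h
    · exact Or.inl (ltn_mono_succ h)
    · cases hu : u n <;> cases hv : v n
      · exact Or.inr (Or.inl (eqn_succ.2 ⟨h, by rw [hu, hv]⟩))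
      · exact Or.inl (ltn_succ.2 (Or.inr ⟨h, hu, hv⟩))
      · exact Or.inr (Or.inr (ltn_succ.2 (Or.inr ⟨eqn_symm h, hv, hu⟩)))
      · exact Or.inr (Or.inl (eqn_succ.2 ⟨h, by rw [hu, hv]⟩))
    · exact Or.inr (Or.inr (ltn_mono_succ h))

theorem leB_total (n : ℕ) (u v : ℕ → Bool) : leB n u v ∨ leB n v u := by
  rcases leB_trichotomy n u v with h | h | h
  · exact Or.inl (Or.inl h)
  · exact Or.inl (Or.inr h)
  · exact Or.inr (Or.inl h)

theorem leB_antisymm {n u v} (h : leB n u v) (h' : leB n v u) : eqn n u v := by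
  rcases h with h | h
  · rcases h' with h' | h'
    · exact absurd h' (fun h'' => ltn_asymm h h'')
    · exact absurd (eqn_symm h') (ltn_not_eqn h)
  · exact h

theorem ltn_trans_le {n u v w} (h : ltn n u v) (h' : leB n v w) : ltn n u w := by
  rcases h' with h' | h'
  · obtain ⟨i, hi, he, hu, hv⟩ := h
    obtain ⟨j, hj, he', hv', hw⟩ := h'
    rcases lt_trichotomy i j with hij | hij | hij
    · exact ⟨i, hi, eqn_trans he (eqn_mono (le_of_lt hij) he'), hu, by rw [← he' i hij, hv]⟩
    · subst hij; rw [hv'] at hv; exact absurd hv (by simp)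
    · exact ⟨j, hj, eqn_trans (eqn_mono (le_of_lt hij) he) he', by rw [he j hij, hv'], hw⟩
  · obtain ⟨i, hi, he, hu, hv⟩ := h
    exact ⟨i, hi, eqn_trans he (eqn_mono (le_of_lt hi) h'), hu, by rw [← h' i hi, hv]⟩

theorem le_ltn_trans {n u v w} (h : eqn n u v) (h' : ltn n v w) : ltn n u w := by
  obtain ⟨j, hj, he', hv', hw⟩ := h'
  exact ⟨j, hj, eqn_trans (eqn_mono (le_of_lt hj) h) he', by rw [h j hj, hv'], hw⟩

theorem leB_trans {n u v w} (h : leB n u v) (h' : leB n v w) : leB n u w := by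
  rcases h with h | h
  · exact Or.inl (ltn_trans_le h h')
  · rcases h' with h' | h'
    · exact Or.inl (le_ltn_trans h h')
    · exact Or.inr (eqn_trans h h')

theorem leB_congr_left {n u u' v} (h : eqn n u u') (h' : leB n u v) : leB n u' v :=
  leB_trans (Or.inr (eqn_symm h)) h'


section Orbit

variable {X : Type*} (T : Equiv.Perm X) (a : X → ℕ → Bool)

theorem zadd (k j : ℤ) (x : X) : (T ^ k) ((T ^ j) x) = (T ^ (k + j)) x := by
  rw [zpow_add]; rfl

theorem zzero (x : X) : (T ^ (0:ℤ)) x = x := by rw [zpow_zero]; rfl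

/-- `x` is periodic. -/
def PerPt (x : X) : Prop := ∃ m : ℤ, m ≠ 0 ∧ (T ^ m) x = x

/-- orbit relation -/
def Orb (x y : X) : Prop := ∃ k : ℤ, (T ^ k) x = y

theorem Orb.refl (x : X) : Orb T x x := ⟨0, zzero T x⟩
theorem Orb.symm {x y : X} (h : Orb T x y) : Orb T y x := by
  obtain ⟨k, hk⟩ := h
  exact ⟨-k, by rw [← hk, zadd, neg_add_cancel, zzero]⟩
theorem Orb.trans {x y z : X} (h : Orb T x y) (h' : Orb T y z) : Orb T x z := by
  obtain ⟨k, hk⟩ := h; obtain ⟨k', hk'⟩ := h'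
  exact ⟨k' + k, by rw [← zadd, hk, hk']⟩

theorem notPer_inj {x : X} (hx : ¬ PerPt T x) {i j : ℤ} (h : (T ^ i) x = (T ^ j) x) : i = j := by
  by_contra hij
  refine hx ⟨-j + i, by omega, ?_⟩
  rw [← zadd, h, zadd, neg_add_cancel, zzero]

theorem Per_shift (k : ℤ) (x : X) : PerPt T ((T ^ k) x) ↔ PerPt T x := by
  constructor
  · rintro ⟨m, hm, h⟩
    refine ⟨m, hm, ?_⟩
    rw [zadd] at h
    have := congrArg (fun z => (T ^ (-k)) z) h
    rw [zadd, zadd] at this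
    rw [show -k + (m + k) = m by ring] at this
    rw [show -k + k = (0:ℤ) by ring, zzero] at this
    exact this
  · rintro ⟨m, hm, h⟩
    exact ⟨m, hm, by rw [zadd, show m + k = k + m by ring, ← zadd, h]⟩

theorem Per_orb {x y : X} (h : Orb T x y) (hx : PerPt T x) : PerPt T y := by
  obtain ⟨k, hk⟩ := h
  rw [← hk, Per_shift]; exact hx

/-- the `n`-th marker set: points realizing the lex-least `n`-bit pattern of their orbit -/
def Sn (n : ℕ) : Set X := {x | ∀ j : ℤ, leB n (a x) (a ((T ^ j) x))}

theorem S_anti {m n : ℕ} (hmn : m ≤ n) : Sn T a n ⊆ Sn T a m :=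
  fun _ hx j => leB_mono hmn (hx j)

theorem Sn_shift_mem {n : ℕ} {x : X} {k j : ℤ} :
    (T ^ j) ((T ^ k) x) ∈ Sn T a n ↔ (T ^ (j + k)) x ∈ Sn T a n := by rw [zadd]

theorem Sn_eqn {n : ℕ} {x y : X} (hx : x ∈ Sn T a n) (hy : y ∈ Sn T a n)
    {k : ℤ} (h : (T ^ k) x = y) : eqn n (a x) (a y) := by
  refine leB_antisymm ?_ ?_
  · have := hx k; rwa [h] at this
  · have := hy (-k)
    rw [← h, zadd, neg_add_cancel, zzero, h] at this
    exact this

theorem minEx (x : X) (n : ℕ) : ∃ k : ℤ, ∀ j : ℤ, leB n (a ((T ^ k) x)) (a ((T ^ j) x)) := by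
  induction n with
  | zero => exact ⟨0, fun j => Or.inr (fun i hi => absurd hi (Nat.not_lt_zero i))⟩
  | succ n ih =>
    obtain ⟨k, hk⟩ := ih
    by_cases h : ∃ k' : ℤ, eqn n (a ((T ^ k') x)) (a ((T ^ k) x)) ∧ a ((T ^ k') x) n = false
    · obtain ⟨k', he, hb⟩ := h
      refine ⟨k', fun j => ?_⟩
      have h2 : leB n (a ((T ^ k') x)) (a ((T ^ j) x)) :=
        leB_trans (Or.inr he) (hk j)
      rcases h2 with h2 | h2
      · exact Or.inl (ltn_mono_succ h2)
      · exact leB_succ.2 (Or.inr ⟨h2, Or.inl hb⟩)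
    · refine ⟨k, fun j => ?_⟩
      rcases hk j with h2 | h2
      · exact Or.inl (ltn_mono_succ h2)
      · have hj : a ((T ^ j) x) n = true := by
          by_contra hb
          exact h ⟨j, eqn_symm h2, Bool.not_eq_true _ ▸ hb⟩
        exact leB_succ.2 (Or.inr ⟨h2, Or.inr hj⟩)

theorem Sn_nonempty (x : X) (n : ℕ) : ∃ k : ℤ, (T ^ k) x ∈ Sn T a n := by
  obtain ⟨k, hk⟩ := minEx T a x n
  refine ⟨k, fun j => ?_⟩
  have := hk (j + k)
  rwa [← zadd] at this

/-- `x` is a global lex-minimum of its orbit -/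
def GMpt (x : X) : Prop := ∀ n, x ∈ Sn T a n

def HasGM (x : X) : Prop := ∃ k : ℤ, GMpt T a ((T ^ k) x)

/-- markers bounded above on the orbit of x -/
def BddA (n : ℕ) (x : X) : Prop := ∃ m : ℤ, ∀ k : ℤ, m < k → (T ^ k) x ∉ Sn T a n

def BddB (n : ℕ) (x : X) : Prop := ∃ m : ℤ, ∀ k : ℤ, k < m → (T ^ k) x ∉ Sn T a n

def Bdd (n : ℕ) (x : X) : Prop := BddA T a n x ∨ BddB T a n x

def Bad (x : X) : Prop := ∃ n, Bdd T a n x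

def GoodPt (x : X) : Prop := ¬ PerPt T x ∧ ¬ HasGM T a x ∧ ¬ Bad T a x

theorem BddA_shift (n : ℕ) (k : ℤ) (x : X) : BddA T a n ((T ^ k) x) ↔ BddA T a n x := by
  constructor
  · rintro ⟨m, hm⟩
    refine ⟨m + k, fun k' hk' => ?_⟩
    have := hm (k' - k) (by omega)
    rw [zadd, show k' - k + k = k' by ring] at this
    exact this
  · rintro ⟨m, hm⟩
    refine ⟨m - k, fun k' hk' => ?_⟩
    rw [zadd]
    exact hm (k' + k) (by omega)

theorem BddB_shift (n : ℕ) (k : ℤ) (x : X) : BddB T a n ((T ^ k) x) ↔ BddB T a n x := by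
  constructor
  · rintro ⟨m, hm⟩
    refine ⟨m + k, fun k' hk' => ?_⟩
    have := hm (k' - k) (by omega)
    rw [zadd, show k' - k + k = k' by ring] at this
    exact this
  · rintro ⟨m, hm⟩
    refine ⟨m - k, fun k' hk' => ?_⟩
    rw [zadd]
    exact hm (k' + k) (by omega)

theorem Bdd_shift (n : ℕ) (k : ℤ) (x : X) : Bdd T a n ((T ^ k) x) ↔ Bdd T a n x := by
  unfold Bdd; rw [BddA_shift, BddB_shift]

theorem Bad_shift (k : ℤ) (x : X) : Bad T a ((T ^ k) x) ↔ Bad T a x := by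
  unfold Bad; simp only [Bdd_shift]

theorem HasGM_shift (k : ℤ) (x : X) : HasGM T a ((T ^ k) x) ↔ HasGM T a x := by
  constructor
  · rintro ⟨k', h⟩
    exact ⟨k' + k, by rwa [zadd] at h⟩
  · rintro ⟨k', h⟩
    refine ⟨k' - k, ?_⟩
    rw [zadd, show k' - k + k = k' by ring]
    exact h

theorem Good_shift (k : ℤ) (x : X) : GoodPt T a ((T ^ k) x) ↔ GoodPt T a x := by
  unfold GoodPt; rw [Per_shift, HasGM_shift, Bad_shift]

theorem Good_orb {x y : X} (h : Orb T x y) (hx : GoodPt T a x) : GoodPt T a y := by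
  obtain ⟨k, hk⟩ := h
  rw [← hk, Good_shift]; exact hx


/-- the canonically selected point on degenerate orbits -/
def BadSel (z : X) : Prop := ¬ HasGM T a z ∧ ∃ n, Bdd T a n z ∧ (∀ m < n, ¬ Bdd T a m z) ∧
  ((BddA T a n z ∧ z ∈ Sn T a n ∧ ∀ k : ℤ, 0 < k → (T ^ k) z ∉ Sn T a n) ∨
   (¬ BddA T a n z ∧ z ∈ Sn T a n ∧ ∀ k : ℤ, k < 0 → (T ^ k) z ∉ Sn T a n))

def Sel (z : X) : Prop := ¬ PerPt T z ∧ (GMpt T a z ∨ BadSel T a z)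

theorem Sel_notPer {z : X} (h : Sel T a z) : ¬ PerPt T z := h.1

theorem Sel_smooth {z : X} (h : Sel T a z) : HasGM T a z ∨ Bad T a z := by
  rcases h.2 with h' | h'
  · exact Or.inl ⟨0, by rwa [zzero]⟩
  · obtain ⟨-, n, hbdd, -, -⟩ := h'
    exact Or.inr ⟨n, hbdd⟩

theorem GM_unique (hinj : Function.Injective a) {z z' : X}
    (hz : GMpt T a z) (hz' : GMpt T a z') (h : Orb T z z') : z = z' := by
  obtain ⟨k, hk⟩ := h
  apply hinj
  funext i
  exact Sn_eqn T a (hz (i+1)) (hz' (i+1)) hk i (Nat.lt_succ_self i)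

theorem Sel_unique (hinj : Function.Injective a) {z z' : X}
    (hz : Sel T a z) (hz' : Sel T a z') (h : Orb T z z') : z = z' := by
  obtain ⟨k, hk⟩ := h
  obtain ⟨hp, hz⟩ := hz
  obtain ⟨hp', hz'⟩ := hz'
  rcases hz with hg | hb
  · rcases hz' with hg' | hb'
    · exact GM_unique T a hinj hg hg' ⟨k, hk⟩
    · exact absurd ⟨-k, by rw [← hk, zadd, neg_add_cancel, zzero]; exact hg⟩ hb'.1
  · rcases hz' with hg' | hb'
    · exact absurd ⟨k, by rwa [hk]⟩ hb.1
    · obtain ⟨-, n, hbdd, hmin, hbr⟩ := hb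
      obtain ⟨-, n', hbdd', hmin', hbr'⟩ := hb'
      have hsh : ∀ m, Bdd T a m z' ↔ Bdd T a m z := by
        intro m; rw [← hk, Bdd_shift]
      have hnn : n = n' := by
        by_contra hne
        rcases Nat.lt_or_ge n n' with hlt | hge
        · exact hmin' n hlt ((hsh n).2 hbdd)
        · exact hmin n' (lt_of_le_of_ne hge (Ne.symm hne)) ((hsh n').1 hbdd')
      subst hnn
      have hAsh : BddA T a n z' ↔ BddA T a n z := by rw [← hk, BddA_shift]
      rcases hbr with ⟨hA, hS, hmax⟩ | ⟨hA, hS, hmin2⟩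
      · rcases hbr' with ⟨hA', hS', hmax'⟩ | ⟨hA', -, -⟩
        · rcases lt_trichotomy k 0 with hk0 | hk0 | hk0
          · have hzz : (T ^ (-k)) z' = z := by rw [← hk, zadd, neg_add_cancel, zzero]
            exact absurd (by rw [hzz]; exact hS) (hmax' (-k) (by omega))
          · subst hk0; rw [zzero] at hk; exact hk
          · exact absurd (hk ▸ hS') (hmax k hk0)
        · exact absurd (hAsh.2 hA) hA'
      · rcases hbr' with ⟨hA', -, -⟩ | ⟨hA', hS', hmin2'⟩
        · exact absurd (hAsh.1 hA') hA
        · rcases lt_trichotomy k 0 with hk0 | hk0 | hk0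
          · exact absurd (hk ▸ hS') (hmin2 k hk0)
          · subst hk0; rw [zzero] at hk; exact hk
          · have hzz : (T ^ (-k)) z' = z := by rw [← hk, zadd, neg_add_cancel, zzero]
            exact absurd (by rw [hzz]; exact hS) (hmin2' (-k) (by omega))

theorem Sel_exists {x : X} (hp : ¬ PerPt T x) (hs : HasGM T a x ∨ Bad T a x) :
    ∃ k : ℤ, Sel T a ((T ^ k) x) := by
  by_cases hg : HasGM T a x
  · obtain ⟨k, hk⟩ := hg
    exact ⟨k, by rw [Sel, Per_shift]; exact ⟨hp, Or.inl hk⟩⟩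
  · have hbad : Bad T a x := hs.resolve_left hg
    classical
    have hn0 := Nat.find_spec hbad
    set n₀ := Nat.find hbad with hn0def
    have hmin : ∀ m < n₀, ¬ Bdd T a m x := fun m hm => Nat.find_min hbad hm
    by_cases hA : BddA T a n₀ x
    · obtain ⟨m, hm⟩ := hA
      obtain ⟨lub, hlubS, hlubmax⟩ := Int.exists_greatest_of_bdd
        (P := fun k => (T ^ k) x ∈ Sn T a n₀)
        ⟨m, fun z hz => by by_contra h; exact hm z (by omega) hz⟩ (Sn_nonempty T a x n₀)
      refine ⟨lub, ?_, Or.inr ?_⟩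
      · rw [Per_shift]; exact hp
      · refine ⟨by rw [HasGM_shift]; exact hg, n₀, by rw [Bdd_shift]; exact hn0,
          fun m' hm' => by rw [Bdd_shift]; exact hmin m' hm', Or.inl ⟨?_, hlubS, ?_⟩⟩
        · rw [BddA_shift]; exact ⟨m, hm⟩
        · intro k hk hS
          rw [zadd] at hS
          have := hlubmax (k + lub) hS
          omega
    · have hB : BddB T a n₀ x := hn0.resolve_left hA
      obtain ⟨m, hm⟩ := hB
      obtain ⟨glb, hglbS, hglbmin⟩ := Int.exists_least_of_bdd
        (P := fun k => (T ^ k) x ∈ Sn T a n₀)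
        ⟨m, fun z hz => by by_contra h; exact hm z (by omega) hz⟩ (Sn_nonempty T a x n₀)
      refine ⟨glb, ?_, Or.inr ?_⟩
      · rw [Per_shift]; exact hp
      · refine ⟨by rw [HasGM_shift]; exact hg, n₀, by rw [Bdd_shift]; exact hn0,
          fun m' hm' => by rw [Bdd_shift]; exact hmin m' hm', Or.inr ⟨?_, hglbS, ?_⟩⟩
        · rw [BddA_shift]; exact hA
        · intro k hk hS
          rw [zadd] at hS
          have := hglbmin (k + glb) hS
          omega

/-- `p` is the distance from `x` to the first `n`-marker weakly ahead of `x` -/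
def fmP (n : ℕ) (x : X) (p : ℕ) : Prop :=
  (T ^ (p:ℤ)) x ∈ Sn T a n ∧ ∀ i : ℕ, i < p → (T ^ (i:ℤ)) x ∉ Sn T a n

theorem fm_unique {n : ℕ} {x : X} {p q : ℕ} (hp : fmP T a n x p) (hq : fmP T a n x q) :
    p = q := by
  rcases lt_trichotomy p q with h | h | h
  · exact absurd hp.1 (hq.2 p h)
  · exact h
  · exact absurd hq.1 (hp.2 q h)

theorem fm_exists {x : X} (hx : GoodPt T a x) (n : ℕ) : ∃ p, fmP T a n x p := by
  classical
  have hA : ¬ BddA T a n x := fun h => hx.2.2 ⟨n, Or.inl h⟩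
  rw [BddA] at hA
  push_neg at hA
  obtain ⟨k, hk0, hkS⟩ := hA 0
  have hex : ∃ j : ℕ, (T ^ (j:ℤ)) x ∈ Sn T a n :=
    ⟨k.toNat, by rw [Int.toNat_of_nonneg (le_of_lt hk0)]; exact hkS⟩
  exact ⟨Nat.find hex, Nat.find_spec hex, fun i hi => Nat.find_min hex hi⟩

theorem unbdd_below {x : X} (hx : GoodPt T a x) (n : ℕ) (m : ℤ) :
    ∃ k < m, (T ^ k) x ∈ Sn T a n := by
  have hB : ¬ BddB T a n x := fun h => hx.2.2 ⟨n, Or.inr h⟩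
  rw [BddB] at hB
  push_neg at hB
  obtain ⟨k, hk, hkS⟩ := hB m
  exact ⟨k, hk, hkS⟩

theorem noGM_escape {x : X} (hx : ¬ HasGM T a x) (k : ℤ) : ∃ n, (T ^ k) x ∉ Sn T a n := by
  by_contra h
  push_neg at h
  exact hx ⟨k, h⟩

def Fmark (n : ℕ) (x y : X) : Prop :=
  ∃ p q : ℕ, fmP T a n x p ∧ fmP T a n y q ∧ (T ^ (p:ℤ)) x = (T ^ (q:ℤ)) y

theorem Fmark_refl {x : X} (hx : GoodPt T a x) (n : ℕ) : Fmark T a n x x := by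
  obtain ⟨p, hp⟩ := fm_exists T a hx n
  exact ⟨p, p, hp, hp, rfl⟩

theorem Fmark_symm {n : ℕ} {x y : X} (h : Fmark T a n x y) : Fmark T a n y x := by
  obtain ⟨p, q, hp, hq, he⟩ := h
  exact ⟨q, p, hq, hp, he.symm⟩

theorem Fmark_trans {n : ℕ} {x y z : X} (h : Fmark T a n x y) (h' : Fmark T a n y z) :
    Fmark T a n x z := by
  obtain ⟨p, q, hp, hq, he⟩ := h
  obtain ⟨q', r, hq', hr, he'⟩ := h'
  have : q = q' := fm_unique T a hq hq'
  subst this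
  exact ⟨p, r, hp, hr, he.trans he'⟩

theorem Fmark_orb {n : ℕ} {x y : X} (h : Fmark T a n x y) : Orb T x y := by
  obtain ⟨p, q, -, -, he⟩ := h
  refine ⟨-(q:ℤ) + p, ?_⟩
  rw [← zadd, he, zadd, neg_add_cancel, zzero]

theorem Fmark_mono {n : ℕ} {x y : X} (hx : GoodPt T a x) (h : Fmark T a n x y) :
    Fmark T a (n+1) x y := by
  obtain ⟨p, q, hp, hq, he⟩ := h
  set z := (T ^ (p:ℤ)) x with hz
  have hzg : GoodPt T a z := by rw [hz, Good_shift]; exact hx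
  obtain ⟨r, hr⟩ := fm_exists T a hzg (n+1)
  refine ⟨p + r, q + r, ⟨?_, ?_⟩, ⟨?_, ?_⟩, ?_⟩
  · have : (T ^ ((p + r : ℕ):ℤ)) x = (T ^ (r:ℤ)) z := by
      rw [hz, zadd, show (r:ℤ) + (p:ℤ) = ((p + r : ℕ):ℤ) by omega]
    rw [this]; exact hr.1
  · intro i hi
    rcases Nat.lt_or_ge i p with h2 | h2
    · exact fun hS => hp.2 i h2 (S_anti T a (Nat.le_succ n) hS)
    · have : (T ^ ((i:ℕ):ℤ)) x = (T ^ ((i - p : ℕ):ℤ)) z := by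
        rw [hz, zadd, show ((i - p : ℕ):ℤ) + (p:ℤ) = ((i:ℕ):ℤ) by omega]
      rw [this]; exact hr.2 (i - p) (by omega)
  · have : (T ^ ((q + r : ℕ):ℤ)) y = (T ^ (r:ℤ)) z := by
      rw [he, zadd, show (r:ℤ) + (q:ℤ) = ((q + r : ℕ):ℤ) by omega]
    rw [this]; exact hr.1
  · intro i hi
    rcases Nat.lt_or_ge i q with h2 | h2
    · exact fun hS => hq.2 i h2 (S_anti T a (Nat.le_succ n) hS)
    · have : (T ^ ((i:ℕ):ℤ)) y = (T ^ ((i - q : ℕ):ℤ)) z := by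
        rw [he, zadd, show ((i - q : ℕ):ℤ) + (q:ℤ) = ((i:ℕ):ℤ) by omega]
      rw [this]; exact hr.2 (i - q) (by omega)
  · have h1 : (T ^ ((p + r : ℕ):ℤ)) x = (T ^ (r:ℤ)) z := by
      rw [hz, zadd, show (r:ℤ) + (p:ℤ) = ((p + r : ℕ):ℤ) by omega]
    have h2 : (T ^ ((q + r : ℕ):ℤ)) y = (T ^ (r:ℤ)) z := by
      rw [he, zadd, show (r:ℤ) + (q:ℤ) = ((q + r : ℕ):ℤ) by omega]
    rw [h1, h2]

theorem Fmark_finite {x : X} (hx : GoodPt T a x) (n : ℕ) :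
    {y | Fmark T a n x y}.Finite := by
  obtain ⟨p, hp⟩ := fm_exists T a hx n
  obtain ⟨k₀, hk₀m, hk₀S⟩ := unbdd_below T a hx n 0
  apply Set.Finite.subset ((Set.finite_Icc k₀ (p:ℤ)).image (fun d : ℤ => (T ^ d) x))
  rintro y ⟨p', q, hp', hq, he⟩
  have hpp : p' = p := fm_unique T a hp' hp
  rw [hpp] at he
  have hy : y = (T ^ (-(q:ℤ) + p)) x := by
    rw [← zadd, he, zadd, neg_add_cancel, zzero]
  refine ⟨-(q:ℤ) + p, ?_, hy.symm⟩
  simp only [Set.mem_Icc]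
  constructor
  · by_contra hcon
    push_neg at hcon
    have hilt : (k₀ - (-(q:ℤ) + p)).toNat < q := by omega
    refine hq.2 (k₀ - (-(q:ℤ) + p)).toNat hilt ?_
    have : (T ^ (((k₀ - (-(q:ℤ) + p)).toNat : ℕ):ℤ)) y = (T ^ k₀) x := by
      rw [hy, zadd, show ((k₀ - (-(q:ℤ) + p)).toNat : ℤ) + (-(q:ℤ) + p) = k₀ by omega]
    rw [this]; exact hk₀S
  · omega

theorem Fmark_union_nonneg {x : X} (hx : GoodPt T a x) (d : ℕ) :
    ∃ n, Fmark T a n x ((T ^ (d:ℤ)) x) := by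
  classical
  have h1 : ∀ i : ℕ, ∃ m : ℕ, i < d → (T ^ (i:ℤ)) x ∉ Sn T a m := by
    intro i
    by_cases h : i < d
    · obtain ⟨m, hm⟩ := noGM_escape T a hx.2.1 (i:ℤ)
      exact ⟨m, fun _ => hm⟩
    · exact ⟨0, fun h' => absurd h' h⟩
  choose nf hnf using h1
  set N := (Finset.range d).sup nf with hN
  have h2 : ∀ i : ℕ, i < d → (T ^ (i:ℤ)) x ∉ Sn T a N := by
    intro i hi hS
    exact hnf i hi (S_anti T a (Finset.le_sup (Finset.mem_range.2 hi)) hS)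
  obtain ⟨p, hp⟩ := fm_exists T a hx N
  have hdp : d ≤ p := by
    by_contra h
    exact h2 p (by omega) hp.1
  refine ⟨N, p, p - d, hp, ⟨?_, ?_⟩, ?_⟩
  · have : (T ^ ((p - d : ℕ):ℤ)) ((T ^ (d:ℤ)) x) = (T ^ (p:ℤ)) x := by
      rw [zadd, show ((p - d : ℕ):ℤ) + (d:ℤ) = ((p:ℕ):ℤ) by omega]
    rw [this]; exact hp.1
  · intro i hi
    have : (T ^ ((i:ℕ):ℤ)) ((T ^ (d:ℤ)) x) = (T ^ ((i + d : ℕ):ℤ)) x := by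
      rw [zadd, show ((i:ℕ):ℤ) + (d:ℤ) = ((i + d : ℕ):ℤ) by omega]
    rw [this]
    exact hp.2 (i + d) (by omega)
  · have : (T ^ ((p - d : ℕ):ℤ)) ((T ^ (d:ℤ)) x) = (T ^ (p:ℤ)) x := by
      rw [zadd, show ((p - d : ℕ):ℤ) + (d:ℤ) = ((p:ℕ):ℤ) by omega]
    rw [this]

theorem Fmark_union {x y : X} (hx : GoodPt T a x) (hy : GoodPt T a y) (h : Orb T x y) :
    ∃ n, Fmark T a n x y := by
  obtain ⟨d, hd⟩ := h
  rcases le_or_gt 0 d with h0 | h0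
  · obtain ⟨n, hn⟩ := Fmark_union_nonneg T a hx d.toNat
    refine ⟨n, ?_⟩
    rw [Int.toNat_of_nonneg h0, hd] at hn
    exact hn
  · have hxy : x = (T ^ ((-d).toNat : ℤ)) y := by
      rw [Int.toNat_of_nonneg (by omega), ← hd, zadd, neg_add_cancel, zzero]
    obtain ⟨n, hn⟩ := Fmark_union_nonneg T a hy (-d).toNat
    exact ⟨n, Fmark_symm T a (by rw [hxy]; exact hn)⟩

def Fsel (n : ℕ) (x y : X) : Prop :=
  ∃ i j : ℤ, i.natAbs ≤ n ∧ j.natAbs ≤ n ∧ Sel T a ((T ^ i) x) ∧ (T ^ j) ((T ^ i) x) = y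

theorem Fsel_mono {n : ℕ} {x y : X} (h : Fsel T a n x y) : Fsel T a (n+1) x y := by
  obtain ⟨i, j, hi, hj, hsel, he⟩ := h
  exact ⟨i, j, by omega, by omega, hsel, he⟩

theorem Fsel_orb {n : ℕ} {x y : X} (h : Fsel T a n x y) : Orb T x y := by
  obtain ⟨i, j, -, -, -, he⟩ := h
  exact ⟨j + i, by rw [← zadd, he]⟩

theorem Fsel_symm {n : ℕ} {x y : X} (h : Fsel T a n x y) : Fsel T a n y x := by
  obtain ⟨i, j, hi, hj, hsel, he⟩ := h
  refine ⟨-j, -i, by omega, by omega, ?_, ?_⟩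
  · have : (T ^ (-j)) y = (T ^ i) x := by rw [← he, zadd, neg_add_cancel, zzero]
    rw [this]; exact hsel
  · have : (T ^ (-j)) y = (T ^ i) x := by rw [← he, zadd, neg_add_cancel, zzero]
    rw [this, zadd, neg_add_cancel, zzero]

theorem Fsel_notPer {n : ℕ} {x y : X} (h : Fsel T a n x y) : ¬ PerPt T x := by
  obtain ⟨i, j, -, -, hsel, -⟩ := h
  intro hp
  exact hsel.1 ((Per_shift T i x).2 hp)

theorem Fsel_smooth {n : ℕ} {x y : X} (h : Fsel T a n x y) : HasGM T a x ∨ Bad T a x := by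
  obtain ⟨i, j, -, -, hsel, -⟩ := h
  rcases Sel_smooth T a hsel with h' | h'
  · exact Or.inl ((HasGM_shift T a i x).1 h')
  · exact Or.inr ((Bad_shift T a i x).1 h')

theorem Fsel_trans (hinj : Function.Injective a) {n : ℕ} {x y z : X}
    (h : Fsel T a n x y) (h' : Fsel T a n y z) : Fsel T a n x z := by
  obtain ⟨i, j, hi, hj, hsel, he⟩ := h
  obtain ⟨i', j', hi', hj', hsel', he'⟩ := h'
  have horb : Orb T ((T ^ i) x) ((T ^ i') y) := by
    refine ⟨i' + j, ?_⟩
    rw [← zadd, he]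
  have := Sel_unique T a hinj hsel hsel' horb
  refine ⟨i, j', hi, hj', hsel, ?_⟩
  rw [this, he']

theorem Fsel_union {x y : X} (hp : ¬ PerPt T x) (hs : HasGM T a x ∨ Bad T a x)
    (h : Orb T x y) : ∃ n, Fsel T a n x y := by
  obtain ⟨m, hm⟩ := Sel_exists T a hp hs
  obtain ⟨d, hd⟩ := h
  refine ⟨max m.natAbs (d - m).natAbs, m, d - m, le_max_left _ _, le_max_right _ _, hm, ?_⟩
  rw [zadd, sub_add_cancel, hd]

theorem Fsel_finite {x : X} (n : ℕ) : {y | Fsel T a n x y}.Finite := by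
  apply Set.Finite.subset ((Set.finite_Icc (-(2*(n:ℤ))) (2*(n:ℤ))).image (fun d : ℤ => (T ^ d) x))
  rintro y ⟨i, j, hi, hj, -, he⟩
  refine ⟨j + i, ?_, by show (T ^ (j + i)) x = y; rw [← zadd, he]⟩
  simp only [Set.mem_Icc]
  omega

theorem Per_orbit_finite {x : X} (hx : PerPt T x) : {y | Orb T x y}.Finite := by
  obtain ⟨m, hm0, hm⟩ := hx
  have key : ∃ m : ℤ, 0 < m ∧ (T ^ m) x = x := by
    rcases lt_trichotomy 0 m with h | h | h
    · exact ⟨m, h, hm⟩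
    · omega
    · refine ⟨-m, by omega, ?_⟩
      have := congrArg (fun z => (T ^ (-m)) z) hm
      rw [zadd, neg_add_cancel, zzero] at this
      exact this.symm
  obtain ⟨m, hm0, hm⟩ := key
  apply Set.Finite.subset ((Set.finite_Icc (0:ℤ) (m-1)).image (fun k : ℤ => (T ^ k) x))
  rintro y ⟨k, hk⟩
  have hdm : m * (k / m) + k % m = k := Int.mul_ediv_add_emod k m
  have hfix : (T ^ (m * (k / m))) x = x := by
    rw [zpow_mul]
    exact (Function.IsFixedPt.perm_zpow hm (k / m) : _)
  refine ⟨k % m, ?_, ?_⟩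
  · simp only [Set.mem_Icc]
    have h1 := Int.emod_nonneg k (by omega : m ≠ 0)
    have h2 := Int.emod_lt_of_pos k hm0
    omega
  · show (T ^ (k % m)) x = y
    rw [← hk]
    conv_rhs => rw [show k = k % m + m * (k / m) by omega]
    rw [← zadd, hfix]

/-- The global finite approximating relations. -/
def FF (n : ℕ) (x y : X) : Prop :=
  x = y ∨ (PerPt T x ∧ PerPt T y ∧ Orb T x y) ∨ Fsel T a n x y ∨
    (GoodPt T a x ∧ GoodPt T a y ∧ Fmark T a n x y)

theorem FF_refl (n : ℕ) (x : X) : FF T a n x x := Or.inl rfl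

theorem FF_symm {n : ℕ} {x y : X} (h : FF T a n x y) : FF T a n y x := by
  rcases h with h | ⟨h1, h2, h3⟩ | h | ⟨h1, h2, h3⟩
  · exact Or.inl h.symm
  · exact Or.inr (Or.inl ⟨h2, h1, h3.symm⟩)
  · exact Or.inr (Or.inr (Or.inl (Fsel_symm T a h)))
  · exact Or.inr (Or.inr (Or.inr ⟨h2, h1, Fmark_symm T a h3⟩))

theorem FF_orb {n : ℕ} {x y : X} (h : FF T a n x y) : Orb T x y := by
  rcases h with h | ⟨-, -, h⟩ | h | ⟨-, -, h⟩
  · exact h ▸ Orb.refl T x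
  · exact h
  · exact Fsel_orb T a h
  · exact Fmark_orb T a h

theorem FF_trans (hinj : Function.Injective a) {n : ℕ} {x y z : X}
    (h : FF T a n x y) (h' : FF T a n y z) : FF T a n x z := by
  rcases h with h | ⟨h1, h2, h3⟩ | h | ⟨h1, h2, h3⟩
  · exact h ▸ h'
  · rcases h' with h' | ⟨h1', h2', h3'⟩ | h' | ⟨h1', -, -⟩
    · exact h' ▸ Or.inr (Or.inl ⟨h1, h2, h3⟩)
    · exact Or.inr (Or.inl ⟨h1, h2', Orb.trans T h3 h3'⟩)
    · exact absurd h2 (Fsel_notPer T a h')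
    · exact absurd h2 h1'.1
  · rcases h' with h' | ⟨h1', -, -⟩ | h' | ⟨h1', -, -⟩
    · exact h' ▸ Or.inr (Or.inr (Or.inl h))
    · exact absurd h1' (Fsel_notPer T a (Fsel_symm T a h))
    · exact Or.inr (Or.inr (Or.inl (Fsel_trans T a hinj h h')))
    · rcases Fsel_smooth T a (Fsel_symm T a h) with hs | hs
      · exact absurd hs h1'.2.1
      · exact absurd hs h1'.2.2
  · rcases h' with h' | ⟨h1', -, -⟩ | h' | ⟨-, h2', h3'⟩
    · exact h' ▸ Or.inr (Or.inr (Or.inr ⟨h1, h2, h3⟩))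
    · exact absurd h1' h2.1
    · rcases Fsel_smooth T a h' with hs | hs
      · exact absurd hs h2.2.1
      · exact absurd hs h2.2.2
    · exact Or.inr (Or.inr (Or.inr ⟨h1, h2', Fmark_trans T a h3 h3'⟩))

theorem FF_mono {n : ℕ} {x y : X} (h : FF T a n x y) : FF T a (n+1) x y := by
  rcases h with h | h | h | ⟨h1, h2, h3⟩
  · exact Or.inl h
  · exact Or.inr (Or.inl h)
  · exact Or.inr (Or.inr (Or.inl (Fsel_mono T a h)))
  · exact Or.inr (Or.inr (Or.inr ⟨h1, h2, Fmark_mono T a h1 h3⟩))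

theorem FF_finite (n : ℕ) (x : X) : {y | FF T a n x y}.Finite := by
  have hsub : {y | FF T a n x y} ⊆
      {x} ∪ {y | PerPt T x ∧ Orb T x y} ∪ {y | Fsel T a n x y} ∪
        {y | GoodPt T a x ∧ Fmark T a n x y} := by
    rintro y (h | ⟨h1, -, h3⟩ | h | ⟨h1, -, h3⟩)
    · exact Or.inl (Or.inl (Or.inl h.symm))
    · exact Or.inl (Or.inl (Or.inr ⟨h1, h3⟩))
    · exact Or.inl (Or.inr h)
    · exact Or.inr ⟨h1, h3⟩
  refine Set.Finite.subset ?_ hsub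
  refine (((Set.finite_singleton x).union ?_).union (Fsel_finite T a n)).union ?_
  · by_cases hp : PerPt T x
    · exact (Per_orbit_finite T hp).subset (fun y hy => hy.2)
    · exact Set.finite_empty.subset (fun y hy => absurd hy.1 hp)
  · by_cases hg : GoodPt T a x
    · exact (Fmark_finite T a hg n).subset (fun y hy => hy.2)
    · exact Set.finite_empty.subset (fun y hy => absurd hy.1 hg)

theorem FF_union {x y : X} (h : Orb T x y) : ∃ n, FF T a n x y := by
  by_cases hp : PerPt T x
  · exact ⟨0, Or.inr (Or.inl ⟨hp, Per_orb T h hp, h⟩)⟩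
  · by_cases hs : HasGM T a x ∨ Bad T a x
    · obtain ⟨n, hn⟩ := Fsel_union T a hp hs h
      exact ⟨n, Or.inr (Or.inr (Or.inl hn))⟩
    · push_neg at hs
      have hgx : GoodPt T a x := ⟨hp, hs.1, hs.2⟩
      have hgy : GoodPt T a y := Good_orb T a h hgx
      obtain ⟨n, hn⟩ := Fmark_union T a hgx hgy h
      exact ⟨n, Or.inr (Or.inr (Or.inr ⟨hgx, hgy, hn⟩))⟩

end Orbit

section Meas

variable {X : Type*} [MeasurableSpace X] {T : Equiv.Perm X} {a : X → ℕ → Bool}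

theorem mpow (e : Equiv.Perm X) (he : Measurable (e : X → X)) :
    ∀ n : ℕ, Measurable ((e ^ n : Equiv.Perm X) : X → X) := by
  intro n
  induction n with
  | zero => simpa [pow_zero] using measurable_id
  | succ n ih =>
    have : ((e ^ (n+1) : Equiv.Perm X) : X → X) = fun x => (e ^ n) (e x) := by
      funext x
      rw [pow_succ]
      rfl
    rw [this]
    exact ih.comp he

theorem mzpow (hT : Measurable (T : X → X)) (hT' : Measurable (T.symm : X → X)) (k : ℤ) :
    Measurable (fun x => (T ^ k) x) := by
  cases k with
  | ofNat n =>
    have : (fun x => (T ^ (Int.ofNat n)) x) = ((T ^ n : Equiv.Perm X) : X → X) := by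
      funext x; rw [Int.ofNat_eq_coe, zpow_natCast]
    rw [this]; exact mpow T hT n
  | negSucc n =>
    have : (fun x => (T ^ (Int.negSucc n)) x) = ((T.symm ^ (n+1) : Equiv.Perm X) : X → X) := by
      funext x
      rw [zpow_negSucc]
      have h1 : (T ^ (n+1) : Equiv.Perm X)⁻¹ = (T⁻¹) ^ (n+1) := (inv_pow T (n+1)).symm
      rw [h1, Equiv.Perm.inv_def]
    rw [this]; exact mpow T.symm hT' (n+1)

theorem mBit {α : Type*} [MeasurableSpace α] (ha : Measurable a) {f : α → X}
    (hf : Measurable f) (i : ℕ) : Measurable (fun w => a (f w) i) :=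
  (measurable_pi_apply i).comp (ha.comp hf)

theorem mBitEq {α : Type*} [MeasurableSpace α] (ha : Measurable a) {f g : α → X}
    (hf : Measurable f) (hg : Measurable g) (i : ℕ) :
    MeasurableSet {w | a (f w) i = a (g w) i} := by
  have : {w | a (f w) i = a (g w) i} =
      (fun w => (a (f w) i, a (g w) i)) ⁻¹' {p : Bool × Bool | p.1 = p.2} := rfl
  rw [this]
  exact ((mBit ha hf i).prodMk (mBit ha hg i)) (Set.toFinite _).measurableSet

theorem mBitVal {α : Type*} [MeasurableSpace α] (ha : Measurable a) {f : α → X}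
    (hf : Measurable f) (i : ℕ) (b : Bool) :
    MeasurableSet {w | a (f w) i = b} :=
  (mBit ha hf i) (measurableSet_singleton b)

theorem mEqPt {α : Type*} [MeasurableSpace α] (ha : Measurable a)
    (hinj : Function.Injective a) {f g : α → X}
    (hf : Measurable f) (hg : Measurable g) :
    MeasurableSet {w | f w = g w} := by
  have : {w | f w = g w} = ⋂ i : ℕ, {w | a (f w) i = a (g w) i} := by
    ext w
    simp only [Set.mem_setOf_eq, Set.mem_iInter]
    constructor
    · intro h i; rw [h]
    · intro h; exact hinj (funext h)
  rw [this]
  exact MeasurableSet.iInter (fun i => mBitEq ha hf hg i)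

theorem mEqn {α : Type*} [MeasurableSpace α] (ha : Measurable a) (n : ℕ) {f g : α → X}
    (hf : Measurable f) (hg : Measurable g) :
    MeasurableSet {w | eqn n (a (f w)) (a (g w))} := by
  have : {w | eqn n (a (f w)) (a (g w))} =
      ⋂ i : ℕ, ⋂ (_ : i < n), {w | a (f w) i = a (g w) i} := by
    ext w
    simp only [Set.mem_setOf_eq, Set.mem_iInter, eqn]
  rw [this]
  exact MeasurableSet.iInter fun i => MeasurableSet.iInter fun _ => mBitEq ha hf hg i

theorem mLtn {α : Type*} [MeasurableSpace α] (ha : Measurable a) (n : ℕ) {f g : α → X}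
    (hf : Measurable f) (hg : Measurable g) :
    MeasurableSet {w | ltn n (a (f w)) (a (g w))} := by
  have : {w | ltn n (a (f w)) (a (g w))} =
      ⋃ i : ℕ, ⋃ (_ : i < n),
        ({w | eqn i (a (f w)) (a (g w))} ∩ ({w | a (f w) i = false} ∩ {w | a (g w) i = true})) := by
    ext w
    simp only [Set.mem_setOf_eq, Set.mem_iUnion, Set.mem_inter_iff, ltn]
    tauto
  rw [this]
  exact MeasurableSet.iUnion fun i => MeasurableSet.iUnion fun _ =>
    ((mEqn ha i hf hg).inter ((mBitVal ha hf i false).inter (mBitVal ha hg i true)))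

theorem mLeB {α : Type*} [MeasurableSpace α] (ha : Measurable a) (n : ℕ) {f g : α → X}
    (hf : Measurable f) (hg : Measurable g) :
    MeasurableSet {w | leB n (a (f w)) (a (g w))} := by
  have : {w | leB n (a (f w)) (a (g w))} =
      {w | ltn n (a (f w)) (a (g w))} ∪ {w | eqn n (a (f w)) (a (g w))} := rfl
  rw [this]
  exact (mLtn ha n hf hg).union (mEqn ha n hf hg)

theorem mImp {α : Type*} [MeasurableSpace α] (P : Prop) {s : Set α} (hs : MeasurableSet s) :
    MeasurableSet {w | P → w ∈ s} := by
  by_cases hP : P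
  · simpa [hP] using hs
  · simp [hP]

variable (hT : Measurable (T : X → X)) (hT' : Measurable (T.symm : X → X)) (ha : Measurable a)
include hT hT' ha

theorem mSn (n : ℕ) : MeasurableSet (Sn T a n) := by
  have h : Sn T a n = ⋂ j : ℤ, {x | leB n (a x) (a ((T ^ j) x))} := by
    ext x
    simp only [Sn, Set.mem_setOf_eq, Set.mem_iInter]
  rw [h]
  exact MeasurableSet.iInter fun j => mLeB ha n measurable_id (mzpow hT hT' j)

theorem mSnPre {α : Type*} [MeasurableSpace α] {f : α → X} (hf : Measurable f) (n : ℕ) :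
    MeasurableSet {w | f w ∈ Sn T a n} :=
  hf (mSn hT hT' ha n)

theorem mPer (hinj : Function.Injective a) : MeasurableSet {x | PerPt T x} := by
  have h : {x | PerPt T x} = ⋃ m : ℤ, ⋃ (_ : m ≠ 0), {x | (T ^ m) x = x} := by
    ext x
    simp only [Set.mem_setOf_eq, Set.mem_iUnion, PerPt]
    tauto
  rw [h]
  exact MeasurableSet.iUnion fun m => MeasurableSet.iUnion fun _ =>
    mEqPt ha hinj (mzpow hT hT' m) measurable_id

theorem mGM : MeasurableSet {x | GMpt T a x} := by
  have h : {x | GMpt T a x} = ⋂ n : ℕ, Sn T a n := by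
    ext x
    simp only [Set.mem_setOf_eq, Set.mem_iInter, GMpt]
  rw [h]
  exact MeasurableSet.iInter fun n => mSn hT hT' ha n

theorem mHasGM : MeasurableSet {x | HasGM T a x} := by
  have h : {x | HasGM T a x} = ⋃ k : ℤ, (fun x => (T ^ k) x) ⁻¹' {z | GMpt T a z} := by
    ext x
    simp only [Set.mem_setOf_eq, Set.mem_iUnion, Set.mem_preimage, HasGM]
  rw [h]
  exact MeasurableSet.iUnion fun k => mzpow hT hT' k (mGM hT hT' ha)

theorem mBddA (n : ℕ) : MeasurableSet {x | BddA T a n x} := by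
  have h : {x | BddA T a n x} =
      ⋃ m : ℤ, ⋂ k : ℤ, {x | m < k → x ∈ (fun x => (T ^ k) x) ⁻¹' (Sn T a n)ᶜ} := by
    ext x
    simp only [Set.mem_setOf_eq, Set.mem_iUnion, Set.mem_iInter, Set.mem_preimage,
      Set.mem_compl_iff, BddA]
  rw [h]
  exact MeasurableSet.iUnion fun m => MeasurableSet.iInter fun k =>
    mImp _ (mzpow hT hT' k (mSn hT hT' ha n).compl)

theorem mBddB (n : ℕ) : MeasurableSet {x | BddB T a n x} := by
  have h : {x | BddB T a n x} =
      ⋃ m : ℤ, ⋂ k : ℤ, {x | k < m → x ∈ (fun x => (T ^ k) x) ⁻¹' (Sn T a n)ᶜ} := by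
    ext x
    simp only [Set.mem_setOf_eq, Set.mem_iUnion, Set.mem_iInter, Set.mem_preimage,
      Set.mem_compl_iff, BddB]
  rw [h]
  exact MeasurableSet.iUnion fun m => MeasurableSet.iInter fun k =>
    mImp _ (mzpow hT hT' k (mSn hT hT' ha n).compl)

theorem mBdd (n : ℕ) : MeasurableSet {x | Bdd T a n x} := by
  have h : {x | Bdd T a n x} = {x | BddA T a n x} ∪ {x | BddB T a n x} := rfl
  rw [h]
  exact (mBddA hT hT' ha n).union (mBddB hT hT' ha n)

theorem mBad : MeasurableSet {x | Bad T a x} := by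
  have h : {x | Bad T a x} = ⋃ n : ℕ, {x | Bdd T a n x} := by
    ext x
    simp only [Set.mem_setOf_eq, Set.mem_iUnion, Bad]
  rw [h]
  exact MeasurableSet.iUnion fun n => mBdd hT hT' ha n

theorem mGood (hinj : Function.Injective a) : MeasurableSet {x | GoodPt T a x} := by
  have h : {x | GoodPt T a x} =
      {x | PerPt T x}ᶜ ∩ ({x | HasGM T a x}ᶜ ∩ {x | Bad T a x}ᶜ) := by
    ext x
    simp only [Set.mem_setOf_eq, Set.mem_inter_iff, Set.mem_compl_iff, GoodPt]
  rw [h]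
  exact (mPer hT hT' ha hinj).compl.inter ((mHasGM hT hT' ha).compl.inter (mBad hT hT' ha).compl)

theorem mBadSel : MeasurableSet {z | BadSel T a z} := by
  have h : {z | BadSel T a z} =
      {z | HasGM T a z}ᶜ ∩ ⋃ n : ℕ,
        ({z | Bdd T a n z} ∩ (⋂ m : ℕ, ⋂ (_ : m < n), {z | Bdd T a m z}ᶜ) ∩
          (({z | BddA T a n z} ∩ Sn T a n ∩
              ⋂ k : ℤ, {z | 0 < k → z ∈ (fun z => (T ^ k) z) ⁻¹' (Sn T a n)ᶜ}) ∪
           ({z | BddA T a n z}ᶜ ∩ Sn T a n ∩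
              ⋂ k : ℤ, {z | k < 0 → z ∈ (fun z => (T ^ k) z) ⁻¹' (Sn T a n)ᶜ}))) := by
    ext z
    simp only [Set.mem_setOf_eq, Set.mem_inter_iff, Set.mem_compl_iff, Set.mem_iUnion,
      Set.mem_iInter, Set.mem_union, Set.mem_preimage, BadSel]
    constructor
    · rintro ⟨h1, n, h2, h3, (⟨h4, h5, h6⟩ | ⟨h4, h5, h6⟩)⟩
      · exact ⟨h1, n, ⟨⟨h2, h3⟩, Or.inl ⟨⟨h4, h5⟩, h6⟩⟩⟩
      · exact ⟨h1, n, ⟨⟨h2, h3⟩, Or.inr ⟨⟨h4, h5⟩, h6⟩⟩⟩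
    · rintro ⟨h1, n, ⟨⟨h2, h3⟩, (⟨⟨h4, h5⟩, h6⟩ | ⟨⟨h4, h5⟩, h6⟩)⟩⟩
      · exact ⟨h1, n, h2, h3, Or.inl ⟨h4, h5, h6⟩⟩
      · exact ⟨h1, n, h2, h3, Or.inr ⟨h4, h5, h6⟩⟩
  rw [h]
  refine (mHasGM hT hT' ha).compl.inter (MeasurableSet.iUnion fun n => ?_)
  refine (((mBdd hT hT' ha n).inter (MeasurableSet.iInter fun m =>
    MeasurableSet.iInter fun _ => (mBdd hT hT' ha m).compl)).inter (MeasurableSet.union ?_ ?_))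
  · exact ((mBddA hT hT' ha n).inter (mSn hT hT' ha n)).inter
      (MeasurableSet.iInter fun k => mImp _ (mzpow hT hT' k (mSn hT hT' ha n).compl))
  · exact ((mBddA hT hT' ha n).compl.inter (mSn hT hT' ha n)).inter
      (MeasurableSet.iInter fun k => mImp _ (mzpow hT hT' k (mSn hT hT' ha n).compl))

theorem mSel (hinj : Function.Injective a) : MeasurableSet {z | Sel T a z} := by
  have h : {z | Sel T a z} =
      {z | PerPt T z}ᶜ ∩ ({z | GMpt T a z} ∪ {z | BadSel T a z}) := by
    ext z
    simp only [Set.mem_setOf_eq, Set.mem_inter_iff, Set.mem_compl_iff, Set.mem_union, Sel]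
  rw [h]
  exact (mPer hT hT' ha hinj).compl.inter ((mGM hT hT' ha).union (mBadSel hT hT' ha))

theorem mFmarkPair (hinj : Function.Injective a) (n : ℕ) :
    MeasurableSet {p : X × X | Fmark T a n p.1 p.2} := by
  have h : {p : X × X | Fmark T a n p.1 p.2} =
      ⋃ i : ℕ, ⋃ j : ℕ,
        (({p : X × X | (T ^ (i:ℤ)) p.1 ∈ Sn T a n} ∩
            ⋂ i' : ℕ, ⋂ (_ : i' < i), {p : X × X | (T ^ (i':ℤ)) p.1 ∈ Sn T a n}ᶜ) ∩
         ({p : X × X | (T ^ (j:ℤ)) p.2 ∈ Sn T a n} ∩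
            ⋂ j' : ℕ, ⋂ (_ : j' < j), {p : X × X | (T ^ (j':ℤ)) p.2 ∈ Sn T a n}ᶜ) ∩
         {p : X × X | (T ^ (i:ℤ)) p.1 = (T ^ (j:ℤ)) p.2}) := by
    ext p
    simp only [Set.mem_setOf_eq, Set.mem_iUnion, Set.mem_iInter, Set.mem_inter_iff,
      Set.mem_compl_iff, Fmark, fmP]
    tauto
  rw [h]
  refine MeasurableSet.iUnion fun i => MeasurableSet.iUnion fun j => ?_
  refine MeasurableSet.inter (MeasurableSet.inter ?_ ?_) ?_
  · exact (mSnPre hT hT' ha ((mzpow hT hT' (i:ℤ)).comp measurable_fst) n).inter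
      (MeasurableSet.iInter fun i' => MeasurableSet.iInter fun _ =>
        (mSnPre hT hT' ha ((mzpow hT hT' (i':ℤ)).comp measurable_fst) n).compl)
  · exact (mSnPre hT hT' ha ((mzpow hT hT' (j:ℤ)).comp measurable_snd) n).inter
      (MeasurableSet.iInter fun j' => MeasurableSet.iInter fun _ =>
        (mSnPre hT hT' ha ((mzpow hT hT' (j':ℤ)).comp measurable_snd) n).compl)
  · exact mEqPt ha hinj ((mzpow hT hT' (i:ℤ)).comp measurable_fst)
      ((mzpow hT hT' (j:ℤ)).comp measurable_snd)

theorem mFselPair (hinj : Function.Injective a) (n : ℕ) :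
    MeasurableSet {p : X × X | Fsel T a n p.1 p.2} := by
  have h : {p : X × X | Fsel T a n p.1 p.2} =
      ⋃ i : ℤ, ⋃ j : ℤ, ⋃ (_ : i.natAbs ≤ n), ⋃ (_ : j.natAbs ≤ n),
        ({p : X × X | (T ^ i) p.1 ∈ {z | Sel T a z}} ∩
         {p : X × X | (T ^ j) ((T ^ i) p.1) = p.2}) := by
    ext p
    simp only [Set.mem_setOf_eq, Set.mem_iUnion, Set.mem_inter_iff, Fsel]
    tauto
  rw [h]
  refine MeasurableSet.iUnion fun i => MeasurableSet.iUnion fun j =>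
    MeasurableSet.iUnion fun _ => MeasurableSet.iUnion fun _ => MeasurableSet.inter ?_ ?_
  · exact ((mzpow hT hT' i).comp measurable_fst) (mSel hT hT' ha hinj)
  · exact mEqPt ha hinj ((mzpow hT hT' j).comp ((mzpow hT hT' i).comp measurable_fst))
      measurable_snd

theorem mOrbPair (hinj : Function.Injective a) :
    MeasurableSet {p : X × X | Orb T p.1 p.2} := by
  have h : {p : X × X | Orb T p.1 p.2} =
      ⋃ k : ℤ, {p : X × X | (T ^ k) p.1 = p.2} := by
    ext p
    simp only [Set.mem_setOf_eq, Set.mem_iUnion, Orb]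
  rw [h]
  exact MeasurableSet.iUnion fun k =>
    mEqPt ha hinj ((mzpow hT hT' k).comp measurable_fst) measurable_snd

theorem mFFPair (hinj : Function.Injective a) (n : ℕ) :
    MeasurableSet {p : X × X | FF T a n p.1 p.2} := by
  have h : {p : X × X | FF T a n p.1 p.2} =
      {p : X × X | p.1 = p.2} ∪
      (({p : X × X | PerPt T p.1} ∩ {p : X × X | PerPt T p.2} ∩
          {p : X × X | Orb T p.1 p.2}) ∪
       ({p : X × X | Fsel T a n p.1 p.2} ∪
        ({p : X × X | GoodPt T a p.1} ∩ {p : X × X | GoodPt T a p.2} ∩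
          {p : X × X | Fmark T a n p.1 p.2}))) := by
    ext p
    simp only [Set.mem_setOf_eq, Set.mem_union, Set.mem_inter_iff, FF]
    tauto
  rw [h]
  refine (mEqPt ha hinj measurable_fst measurable_snd).union (MeasurableSet.union ?_ ?_)
  · exact ((measurable_fst (mPer hT hT' ha hinj)).inter
      (measurable_snd (mPer hT hT' ha hinj))).inter (mOrbPair hT hT' ha hinj)
  · refine (mFselPair hT hT' ha hinj n).union ?_
    exact ((measurable_fst (mGood hT hT' ha hinj)).inter
      (measurable_snd (mGood hT hT' ha hinj))).inter (mFmarkPair hT hT' ha hinj n)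

end Meas

theorem exists_bits (X : Type*) [MeasurableSpace X] [StandardBorelSpace X] :
    ∃ a : X → ℕ → Bool, Measurable a ∧ Function.Injective a := by
  obtain ⟨f, hf⟩ := MeasureTheory.exists_measurableEmbedding_real X
  let e : ℕ ≃ ℚ := (Denumerable.eqv ℚ).symm
  refine ⟨fun x n => decide ((e n : ℝ) < f x), ?_, ?_⟩
  · apply measurable_pi_lambda
    intro n
    have h : (fun x => decide ((e n : ℝ) < f x)) =
        (fun r : ℝ => decide ((e n : ℝ) < r)) ∘ f := rfl
    rw [h]
    have h2 : (fun r : ℝ => decide ((e n : ℝ) < r)) =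
        (Set.Ioi ((e n : ℝ))).piecewise (fun _ => true) (fun _ => false) := by
      funext r; by_cases h' : (e n : ℝ) < r <;> simp [Set.piecewise, h']
    rw [h2]
    exact (Measurable.piecewise measurableSet_Ioi measurable_const
      measurable_const).comp hf.measurable
  · intro x y hxy
    by_contra hne
    have hfxy : f x ≠ f y := fun h => hne (hf.injective h)
    have key : ∀ u v : X, f u < f v →
        (fun n => decide ((e n : ℝ) < f u)) ≠ (fun n => decide ((e n : ℝ) < f v)) := by
      intro u v huv heq
      obtain ⟨q, hq1, hq2⟩ := exists_rat_btwn huv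
      have := congrFun heq (e.symm q)
      rw [show e (e.symm q) = q from Equiv.apply_symm_apply e q] at this
      rw [decide_eq_false (not_lt.mpr hq1.le), decide_eq_true hq2] at this
      exact absurd this (by simp)
    rcases lt_or_gt_of_ne hfxy with h | h
    · exact key x y h hxy
    · exact key y x h hxy.symm

end SS16

theorem stmt16 {X : Type*} [MeasurableSpace X] [StandardBorelSpace X]
    (T : Equiv.Perm X) (hT : Measurable T) (hT' : Measurable T.symm)
    (E : X → X → Prop) (hE : ∀ x y, E x y ↔ ∃ n : ℤ, (T ^ n) x = y)
    (hBorel : IsBorelER E) : Hyperfinite E := by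
  obtain ⟨a, ha, hinj⟩ := SS16.exists_bits X
  refine ⟨fun n x y => SS16.FF T a n x y, fun n => ⟨?_, ?_⟩, fun n x => ?_,
    fun n x y h => ?_, fun x y => ?_⟩
  · exact ⟨fun x => SS16.FF_refl T a n x, fun h => SS16.FF_symm T a h,
      fun h h' => SS16.FF_trans T a hinj h h'⟩
  · exact SS16.mFFPair hT hT' ha hinj n
  · exact SS16.FF_finite T a n x
  · exact SS16.FF_mono T a h
  · rw [hE]
    constructor
    · intro h; exact SS16.FF_union T a h
    · rintro ⟨n, h⟩; exact SS16.FF_orb T a h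
end

section
/- Let G be a countable group acting in a Borel way on a standard Borel space X, let H ≤ G be a finite-index subgroup, and suppose the orbit equivalence relation E_H of the H-action is hyperfinite. Then the orbit equivalence relation E_G of the G-action is hyperfinite. -/
open Filter MeasureTheory

theorem stmt18 {G X : Type*} [Group G] [Countable G] [MeasurableSpace X]
    [StandardBorelSpace X] [MulAction G X]
    (hact : ∀ g : G, Measurable fun x : X => g • x)
    (H : Subgroup G) [H.FiniteIndex]
    (hH : Hyperfinite (fun x y : X => ∃ h ∈ H, h • x = y)) :
    Hyperfinite (fun x y : X => ∃ g : G, g • x = y) := by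
  obtain ⟨F, hBorel, hFin, hMono, hUnion⟩ := hH
  haveI : Finite (G ⧸ H) := H.finite_quotient_of_finiteIndex
  set r : G ⧸ H → G := fun q => (Quotient.out q)⁻¹ with hr_def
  -- every g lies in some right coset H * (r q)
  have hr : ∀ g : G, ∃ q : G ⧸ H, ∃ h ∈ H, h * r q = g := by
    intro g
    refine ⟨QuotientGroup.mk g⁻¹, g * Quotient.out (QuotientGroup.mk g⁻¹ : G ⧸ H), ?_, ?_⟩
    · have := (QuotientGroup.eq (s := H) (a := g⁻¹)
        (b := Quotient.out (QuotientGroup.mk g⁻¹ : G ⧸ H))).mp (by simp [QuotientGroup.out_eq'])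
      simpa using this
    · simp [hr_def, mul_assoc]
  -- abbreviations
  have hmono' : ∀ m n x y, m ≤ n → F m x y → F n x y := by
    intro m n x y h
    induction n, h using Nat.le_induction with
    | base => exact id
    | succ n hn ih => exact fun h' => hMono n x y (ih h')
  have hFH : ∀ n a b, F n a b → ∃ h ∈ H, h • a = b := fun n a b hf => (hUnion a b).2 ⟨n, hf⟩
  have EHsymm : ∀ a b : X, (∃ h ∈ H, h • a = b) → ∃ h ∈ H, h • b = a := by
    rintro a b ⟨h, hh, rfl⟩
    exact ⟨h⁻¹, H.inv_mem hh, inv_smul_smul h a⟩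
  have EHtrans : ∀ a b c : X, (∃ h ∈ H, h • a = b) → (∃ h ∈ H, h • b = c) →
      ∃ h ∈ H, h • a = c := by
    rintro a b c ⟨h₁, hh₁, rfl⟩ ⟨h₂, hh₂, rfl⟩
    exact ⟨h₂ * h₁, H.mul_mem hh₂ hh₁, (mul_smul h₂ h₁ a)⟩
  have EGofEH : ∀ (a b : G) (x y : X), (∃ h ∈ H, h • (a • x) = b • y) → ∃ g : G, g • x = y := by
    rintro a b x y ⟨h, hh, he⟩
    refine ⟨b⁻¹ * h * a, ?_⟩
    rw [mul_smul, mul_smul, he, inv_smul_smul]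
  -- Claim A: if x, y are in the same G-orbit, then for any s, s•y is H-equivalent to
  -- some representative translate of x.
  have claimA : ∀ (x y : X), (∃ g : G, g • x = y) → ∀ s : G,
      ∃ q : G ⧸ H, ∃ h ∈ H, h • (r q • x) = s • y := by
    rintro x y ⟨g, rfl⟩ s
    obtain ⟨q, h, hh, hmul⟩ := hr (s * g)
    exact ⟨q, h, hh, by rw [smul_smul, hmul, mul_smul]⟩
  classical
  refine ⟨fun n x y => x = y ∨
      ((∃ q q' : G ⧸ H, F n (r q • x) (r q' • y)) ∧
        ∀ q q' : G ⧸ H, (∃ h ∈ H, h • (r q • x) = r q' • y) → F n (r q • x) (r q' • y)),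
    ?_, ?_, ?_, ?_⟩
  · -- Borel equivalence relation
    intro n
    obtain ⟨hEq, hMeas⟩ := hBorel n
    constructor
    · constructor
      · exact fun x => Or.inl rfl
      · rintro x y (rfl | ⟨⟨q, q', hf⟩, hC⟩)
        · exact Or.inl rfl
        · refine Or.inr ⟨⟨q', q, hEq.symm hf⟩, fun a b hab => ?_⟩
          exact hEq.symm (hC b a (EHsymm _ _ hab))
      · rintro x y z (rfl | ⟨⟨q₁, q₂, hf₁⟩, hC₁⟩) hyz
        · exact hyz
        rcases hyz with rfl | ⟨⟨q₃, q₄, hf₂⟩, hC₂⟩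
        · exact Or.inr ⟨⟨q₁, q₂, hf₁⟩, hC₁⟩
        have hxy : ∃ g : G, g • x = y := EGofEH _ _ _ _ (hFH n _ _ hf₁)
        have hyx : ∃ g : G, g • y = x := by
          obtain ⟨g, rfl⟩ := hxy; exact ⟨g⁻¹, inv_smul_smul g x⟩
        refine Or.inr ⟨?_, ?_⟩
        · obtain ⟨q₀, hEH⟩ := claimA x y hxy (r q₃)
          exact ⟨q₀, q₄, hEq.trans (hC₁ q₀ q₃ hEH) hf₂⟩
        · intro q q' hqq'
          obtain ⟨q₅, hEH⟩ := claimA y x hyx (r q)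
          have h1 : F n (r q • x) (r q₅ • y) := hC₁ q q₅ (EHsymm _ _ hEH)
          have h2 : F n (r q₅ • y) (r q' • z) :=
            hC₂ q₅ q' (EHtrans _ _ _ hEH hqq')
          exact hEq.trans h1 h2
    · -- measurability
      have hdiag : MeasurableSet {p : X × X | p.1 = p.2} := by
        letI := upgradeStandardBorel X
        exact isClosed_diagonal.measurableSet
      have hF2 : ∀ a b : G, MeasurableSet {p : X × X | F n (a • p.1) (b • p.2)} := by
        intro a b
        exact hMeas.preimage (((hact a).comp measurable_fst).prodMk
          ((hact b).comp measurable_snd))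
      have hEH2 : ∀ a b : G, MeasurableSet {p : X × X | ∃ h ∈ H, h • (a • p.1) = b • p.2} := by
        intro a b
        have : {p : X × X | ∃ h ∈ H, h • (a • p.1) = b • p.2} =
            ⋃ h : H, {p : X × X | ((h : G) • (a • p.1) : X) = b • p.2} := by
          ext p; simp
        rw [this]
        refine MeasurableSet.iUnion fun h => ?_
        have : {p : X × X | ((h : G) • (a • p.1) : X) = b • p.2} =
            (fun p : X × X => (((h : G) • (a • p.1) : X), (b • p.2 : X))) ⁻¹'
              {p : X × X | p.1 = p.2} := rfl
        rw [this]
        exact hdiag.preimage (((hact _).comp ((hact a).comp measurable_fst)).prodMk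
          ((hact b).comp measurable_snd))
      have hset : {p : X × X | p.1 = p.2 ∨
          ((∃ q q' : G ⧸ H, F n (r q • p.1) (r q' • p.2)) ∧
            ∀ q q' : G ⧸ H, (∃ h ∈ H, h • (r q • p.1) = r q' • p.2) →
              F n (r q • p.1) (r q' • p.2))} =
          {p : X × X | p.1 = p.2} ∪
          ((⋃ q : G ⧸ H, ⋃ q' : G ⧸ H, {p : X × X | F n (r q • p.1) (r q' • p.2)}) ∩
           (⋂ q : G ⧸ H, ⋂ q' : G ⧸ H,
              {p : X × X | ∃ h ∈ H, h • (r q • p.1) = r q' • p.2}ᶜ ∪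
              {p : X × X | F n (r q • p.1) (r q' • p.2)})) := by
        ext p
        simp only [Set.mem_setOf_eq, Set.mem_union, Set.mem_inter_iff, Set.mem_iUnion,
          Set.mem_iInter, Set.mem_compl_iff, Set.mem_setOf_eq]
        constructor
        · rintro (h | ⟨hA, hC⟩)
          · exact Or.inl h
          · exact Or.inr ⟨hA, fun q q' => or_iff_not_imp_left.mpr fun hn =>
              hC q q' (not_not.mp hn)⟩
        · rintro (h | ⟨hA, hC⟩)
          · exact Or.inl h
          · refine Or.inr ⟨hA, fun q q' hqq' => ?_⟩
            rcases hC q q' with hn | hf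
            · exact absurd hqq' hn
            · exact hf
      rw [hset]
      exact hdiag.union ((MeasurableSet.iUnion fun q => MeasurableSet.iUnion fun q' =>
        hF2 _ _).inter (MeasurableSet.iInter fun q => MeasurableSet.iInter fun q' =>
          (hEH2 _ _).compl.union (hF2 _ _)))
  · -- finite classes
    intro n x
    have hsub : {y | x = y ∨
        ((∃ q q' : G ⧸ H, F n (r q • x) (r q' • y)) ∧
          ∀ q q' : G ⧸ H, (∃ h ∈ H, h • (r q • x) = r q' • y) → F n (r q • x) (r q' • y))} ⊆
        {x} ∪ ⋃ q : G ⧸ H, ⋃ q' : G ⧸ H, (fun y : X => r q' • y) ⁻¹' {z | F n (r q • x) z} := by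
      rintro y (rfl | ⟨⟨q, q', hf⟩, -⟩)
      · exact Or.inl rfl
      · exact Or.inr (Set.mem_iUnion.mpr ⟨q, Set.mem_iUnion.mpr ⟨q', hf⟩⟩)
    refine Set.Finite.subset ?_ hsub
    refine (Set.finite_singleton x).union (Set.finite_iUnion fun q => Set.finite_iUnion fun q' =>
      (hFin n (r q • x)).preimage ?_)
    exact Set.injOn_of_injective (MulAction.injective (r q'))
  · -- increasing
    rintro n x y (rfl | ⟨⟨q, q', hf⟩, hC⟩)
    · exact Or.inl rfl
    · exact Or.inr ⟨⟨q, q', hMono n _ _ hf⟩, fun a b hab => hMono n _ _ (hC a b hab)⟩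
  · -- union is E_G
    intro x y
    constructor
    · rintro ⟨g, rfl⟩
      have hfin : ∀ p : (G ⧸ H) × (G ⧸ H), ∃ n,
          (∃ h ∈ H, h • (r p.1 • x) = r p.2 • (g • x)) →
            F n (r p.1 • x) (r p.2 • (g • x)) := by
        intro p
        by_cases hp : ∃ h ∈ H, h • (r p.1 • x) = r p.2 • (g • x)
        · obtain ⟨n, hn⟩ := (hUnion _ _).mp hp
          exact ⟨n, fun _ => hn⟩
        · exact ⟨0, fun h => absurd h hp⟩
      haveI : Fintype ((G ⧸ H) × (G ⧸ H)) := Fintype.ofFinite _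
      choose f hf using hfin
      set N := Finset.univ.sup f with hN
      have hCN : ∀ q q' : G ⧸ H, (∃ h ∈ H, h • (r q • x) = r q' • (g • x)) →
          F N (r q • x) (r q' • (g • x)) := by
        intro q q' hqq'
        exact hmono' _ _ _ _ (Finset.le_sup (Finset.mem_univ (q, q'))) (hf (q, q') hqq')
      refine ⟨N, Or.inr ⟨?_, hCN⟩⟩
      obtain ⟨q, hEH⟩ := claimA x (g • x) ⟨g, rfl⟩ (r (QuotientGroup.mk 1))
      exact ⟨q, QuotientGroup.mk 1, hCN q _ hEH⟩
    · rintro ⟨n, rfl | ⟨⟨q, q', hf⟩, -⟩⟩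
      · exact ⟨1, one_smul G x⟩
      · exact EGofEH _ _ _ _ (hFH n _ _ hf)
end
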